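/- arXiv:math/0007039 — 4 statements merged into one kernel-verified Lean document; each statement's English description precedes it below -/
import Mathlib

section
/- Suppose there is an element u of 𝔥 with φ_u = 0 such that the vectors x_u and y_u are linearly independent over ℂ. Then there exist a sequence (h_m) of elements of H and constants c, C > 0 such that ‖h_m‖ → ∞ as m → ∞ and c·‖h_m‖² ≤ ‖ρ(h_m)‖ ≤ C·‖h_m‖² for every m. -/
open scoped BigOperators

noncomputable section

/-- The matrix of the Hermitian form defining `SU(2,n)` (indices are 0-based;
the paper's 1-based entry `(i,j)` corresponds to `(i-1, j-1)` here). -/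
def Jmat (n : ℕ) : Matrix (Fin (n+2)) (Fin (n+2)) ℂ := fun i j =>
  if ((i:ℕ) = 0 ∧ (j:ℕ) = n+1) ∨ ((i:ℕ) = 1 ∧ (j:ℕ) = n)
      ∨ ((i:ℕ) = n ∧ (j:ℕ) = 1) ∨ ((i:ℕ) = n+1 ∧ (j:ℕ) = 0)
      ∨ (2 ≤ (i:ℕ) ∧ (i:ℕ) + 1 ≤ n ∧ i = j)
  then 1 else 0

/-- Membership in `G = SU(2,n)`. -/
def inG (n : ℕ) (g : Matrix (Fin (n+2)) (Fin (n+2)) ℂ) : Prop :=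
  g.conjTranspose * Jmat n * g = Jmat n ∧ g.det = 1

/-- Membership in the Lie algebra `𝔫` of strictly upper-triangular matrices `u`
with `uᴴJ + Ju = 0`. -/
def inLieN (n : ℕ) (u : Matrix (Fin (n+2)) (Fin (n+2)) ℂ) : Prop :=
  (∀ i j : Fin (n+2), (j:ℕ) ≤ (i:ℕ) → u i j = 0) ∧
  u.conjTranspose * Jmat n + Jmat n * u = 0

def phiC (n : ℕ) (u : Matrix (Fin (n+2)) (Fin (n+2)) ℂ) : ℂ :=
  u ⟨0, by omega⟩ ⟨1, by omega⟩

/-- The vector `x_u ∈ ℂ^{n-2}`, padded by zeros to a vector indexed by `Fin (n+2)`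
(its meaningful entries sit in columns `2,…,n-1`, i.e. the paper's `3,…,n`). -/
def xV (n : ℕ) (u : Matrix (Fin (n+2)) (Fin (n+2)) ℂ) : Fin (n+2) → ℂ := fun j =>
  if 2 ≤ (j:ℕ) ∧ (j:ℕ) + 1 ≤ n then u ⟨0, by omega⟩ j else 0

/-- The vector `y_u ∈ ℂ^{n-2}`, padded by zeros. -/
def yV (n : ℕ) (u : Matrix (Fin (n+2)) (Fin (n+2)) ℂ) : Fin (n+2) → ℂ := fun j =>
  if 2 ≤ (j:ℕ) ∧ (j:ℕ) + 1 ≤ n then u ⟨1, by omega⟩ j else 0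

def etaC (n : ℕ) (u : Matrix (Fin (n+2)) (Fin (n+2)) ℂ) : ℂ :=
  u ⟨0, by omega⟩ ⟨n, by omega⟩

/-- `𝗑_u = Im u_{1,n+2}`. -/
def sxR (n : ℕ) (u : Matrix (Fin (n+2)) (Fin (n+2)) ℂ) : ℝ :=
  (u ⟨0, by omega⟩ ⟨n+1, by omega⟩).im

/-- `𝗒_u = Im u_{2,n+1}`. -/
def syR (n : ℕ) (u : Matrix (Fin (n+2)) (Fin (n+2)) ℂ) : ℝ :=
  (u ⟨1, by omega⟩ ⟨n, by omega⟩).im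

/-- `x y† = Σ xⱼ ȳⱼ`. -/
def dotC (n : ℕ) (x y : Fin (n+2) → ℂ) : ℂ := ∑ j, x j * (starRingEnd ℂ) (y j)

/-- `|x|²` (a real number). -/
def nsqR (n : ℕ) (x : Fin (n+2) → ℂ) : ℝ := ∑ j, Complex.normSq (x j)

/-- Membership in `𝔷 = {u ∈ 𝔥 : φ_u = 0, x_u = 0, y_u = 0}`. -/
def inZ (n : ℕ) (𝔥 : Submodule ℝ (Matrix (Fin (n+2)) (Fin (n+2)) ℂ))
    (u : Matrix (Fin (n+2)) (Fin (n+2)) ℂ) : Prop :=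
  u ∈ 𝔥 ∧ phiC n u = 0 ∧ xV n u = 0 ∧ yV n u = 0

/-- Membership in the root space `𝔘_{2α+2β}`. -/
def inU2a2b (n : ℕ) (u : Matrix (Fin (n+2)) (Fin (n+2)) ℂ) : Prop :=
  inLieN n u ∧ phiC n u = 0 ∧ xV n u = 0 ∧ yV n u = 0 ∧ etaC n u = 0 ∧ syR n u = 0

/-- `H = exp 𝔥`, the image of `𝔥` under the matrix exponential. -/
def expSet (n : ℕ) (𝔥 : Submodule ℝ (Matrix (Fin (n+2)) (Fin (n+2)) ℂ)) :
    Set (Matrix (Fin (n+2)) (Fin (n+2)) ℂ) :=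
  (fun u => NormedSpace.exp u) '' (𝔥 : Set (Matrix (Fin (n+2)) (Fin (n+2)) ℂ))

/-- `‖h‖`: the maximum of the absolute values of the entries of `h`. -/
def entryNorm (n : ℕ) (h : Matrix (Fin (n+2)) (Fin (n+2)) ℂ) : ℝ :=
  Finset.univ.sup' Finset.univ_nonempty
    (fun p : Fin (n+2) × Fin (n+2) => ‖h p.1 p.2‖)

/-- `‖ρ(h)‖`: the maximum of the absolute values of the determinants of all
`2 × 2` submatrices of `h`. -/
def rhoNorm (n : ℕ) (h : Matrix (Fin (n+2)) (Fin (n+2)) ℂ) : ℝ :=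
  Finset.univ.sup' Finset.univ_nonempty
    (fun q : (Fin (n+2) × Fin (n+2)) × Fin (n+2) × Fin (n+2) =>
      ‖h q.1.1 q.2.1 * h q.1.2 q.2.2 - h q.1.1 q.2.2 * h q.1.2 q.2.1‖)

/-- `Δ(h)`: the determinant of the 2×2 submatrix of `h` in rows 1,2 and
columns n+1, n+2 (1-based). -/
def DeltaC (n : ℕ) (h : Matrix (Fin (n+2)) (Fin (n+2)) ℂ) : ℂ :=
  h ⟨0, by omega⟩ ⟨n, by omega⟩ * h ⟨1, by omega⟩ ⟨n+1, by omega⟩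
    - h ⟨0, by omega⟩ ⟨n+1, by omega⟩ * h ⟨1, by omega⟩ ⟨n, by omega⟩


namespace Aux



def sigv (n i : ℕ) : ℕ :=
  if i = 0 then n+1 else if i = 1 then n else if i = n then 1 else if i = n+1 then 0 else i

lemma sigv_sigv (n : ℕ) (hn : 2 ≤ n) {i : ℕ} (hi : i < n+2) : sigv n (sigv n i) = i := by
  unfold sigv; split_ifs <;> first | omega | (exfalso; assumption)

def sg (n : ℕ) (i : Fin (n+2)) : Fin (n+2) :=
  ⟨sigv n i, by have := i.2; unfold sigv; split_ifs <;> first | omega | (exfalso; assumption)⟩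

lemma sg_val (n : ℕ) (i : Fin (n+2)) : (sg n i : ℕ) = sigv n (i : ℕ) := rfl

lemma sg_sg (n : ℕ) (hn : 2 ≤ n) (i : Fin (n+2)) : sg n (sg n i) = i := by
  apply Fin.ext
  rw [sg_val, sg_val]
  exact sigv_sigv n hn i.2

lemma J_apply (n : ℕ) (hn : 2 ≤ n) (i k : Fin (n+2)) :
    Jmat n i k = if k = sg n i then 1 else 0 := by
  have hi := i.2; have hk := k.2
  have h2 : (k = sg n i) ↔ ((k:ℕ) = sigv n (i:ℕ)) := by
    rw [Fin.ext_iff]; exact Iff.rfl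
  have hiff : (((i:ℕ) = 0 ∧ (k:ℕ) = n+1) ∨ ((i:ℕ) = 1 ∧ (k:ℕ) = n)
      ∨ ((i:ℕ) = n ∧ (k:ℕ) = 1) ∨ ((i:ℕ) = n+1 ∧ (k:ℕ) = 0)
      ∨ (2 ≤ (i:ℕ) ∧ (i:ℕ) + 1 ≤ n ∧ i = k)) ↔ (k = sg n i) := by
    rw [h2, Fin.ext_iff]
    unfold sigv
    split_ifs <;> first | omega | (exfalso; assumption)
  show (if _ then (1:ℂ) else 0) = _
  exact if_congr hiff rfl rfl

lemma key (n : ℕ) (hn : 2 ≤ n) (u : Matrix (Fin (n+2)) (Fin (n+2)) ℂ)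
    (heq : u.conjTranspose * Jmat n + Jmat n * u = 0) (i j : Fin (n+2)) :
    (starRingEnd ℂ) (u (sg n j) i) + u (sg n i) j = 0 := by
  have h1 : (u.conjTranspose * Jmat n + Jmat n * u) i j = 0 := by rw [heq]; rfl
  rw [Matrix.add_apply, Matrix.mul_apply, Matrix.mul_apply] at h1
  have e1 : ∑ k, u.conjTranspose i k * Jmat n k j = (starRingEnd ℂ) (u (sg n j) i) := by
    have hptw : ∀ k, u.conjTranspose i k * Jmat n k j
        = if k = sg n j then (starRingEnd ℂ) (u k i) else 0 := by
      intro k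
      rw [Matrix.conjTranspose_apply, J_apply n hn]
      have hc : (j = sg n k) ↔ (k = sg n j) := by
        constructor
        · intro h; rw [h, sg_sg n hn]
        · intro h; rw [h, sg_sg n hn]
      rw [if_congr hc rfl rfl]
      split_ifs <;> simp
    rw [Finset.sum_congr rfl (fun k _ => hptw k), Finset.sum_ite_eq' Finset.univ (sg n j)]
    simp
  have e2 : ∑ k, Jmat n i k * u k j = u (sg n i) j := by
    have hptw : ∀ k, Jmat n i k * u k j = if k = sg n i then u k j else 0 := by
      intro k
      rw [J_apply n hn]
      split_ifs <;> simp
    rw [Finset.sum_congr rfl (fun k _ => hptw k), Finset.sum_ite_eq' Finset.univ (sg n i)]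
    simp
  rw [e1, e2] at h1
  exact h1

section Struct

variable {n : ℕ} (u : Matrix (Fin (n+2)) (Fin (n+2)) ℂ)
  (hup : ∀ i j : Fin (n+2), (j:ℕ) ≤ (i:ℕ) → u i j = 0)
  (heq : u.conjTranspose * Jmat n + Jmat n * u = 0)
  (hphi : u ⟨0, by omega⟩ ⟨1, by omega⟩ = 0)

-- sg at special points
lemma sg_spec0 (hn : 2 ≤ n) : sg n (⟨0, by omega⟩ : Fin (n+2)) = ⟨n+1, by omega⟩ := by
  apply Fin.ext; rw [sg_val]; show sigv n 0 = n+1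
  unfold sigv; split_ifs <;> first | omega | (exfalso; assumption)

lemma sg_spec1 (hn : 2 ≤ n) : sg n (⟨1, by omega⟩ : Fin (n+2)) = ⟨n, by omega⟩ := by
  apply Fin.ext; rw [sg_val]; show sigv n 1 = n
  unfold sigv; split_ifs <;> first | omega | (exfalso; assumption)

lemma sg_specn (hn : 2 ≤ n) : sg n (⟨n, by omega⟩ : Fin (n+2)) = ⟨1, by omega⟩ := by
  apply Fin.ext; rw [sg_val]; show sigv n n = 1
  unfold sigv; split_ifs <;> first | omega | (exfalso; assumption)

lemma sg_specn1 (hn : 2 ≤ n) : sg n (⟨n+1, by omega⟩ : Fin (n+2)) = ⟨0, by omega⟩ := by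
  apply Fin.ext; rw [sg_val]; show sigv n (n+1) = 0
  unfold sigv; split_ifs <;> first | omega | (exfalso; assumption)

lemma sg_int (hn : 2 ≤ n) (k : Fin (n+2)) (h2 : 2 ≤ (k:ℕ)) (h3 : (k:ℕ)+1 ≤ n) :
    sg n k = k := by
  apply Fin.ext; rw [sg_val]; unfold sigv; split_ifs <;> first | omega | (exfalso; assumption)

include hup heq in
lemma fact_int (hn : 2 ≤ n) (i j : Fin (n+2)) (h2 : 2 ≤ (i:ℕ)) (h3 : (i:ℕ)+1 ≤ n)
    (h4 : 2 ≤ (j:ℕ)) (h5 : (j:ℕ)+1 ≤ n) : u i j = 0 := by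
  rcases le_or_gt (j:ℕ) (i:ℕ) with h | h
  · exact hup i j h
  · have hk := key n hn u heq i j
    rw [sg_int hn i h2 h3, sg_int hn j h4 h5] at hk
    rw [hup j i (le_of_lt h)] at hk
    simpa using hk

include hup heq in
lemma fact_kn (hn : 2 ≤ n) (k : Fin (n+2)) (h2 : 2 ≤ (k:ℕ)) (h3 : (k:ℕ)+1 ≤ n) :
    u k ⟨n, by omega⟩ = -(starRingEnd ℂ) (u ⟨1, by omega⟩ k) := by
  have hk := key n hn u heq k ⟨n, by omega⟩
  rw [sg_int hn k h2 h3, sg_specn hn] at hk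
  linear_combination hk

include hup heq in
lemma fact_kn1 (hn : 2 ≤ n) (k : Fin (n+2)) (h2 : 2 ≤ (k:ℕ)) (h3 : (k:ℕ)+1 ≤ n) :
    u k ⟨n+1, by omega⟩ = -(starRingEnd ℂ) (u ⟨0, by omega⟩ k) := by
  have hk := key n hn u heq k ⟨n+1, by omega⟩
  rw [sg_int hn k h2 h3, sg_specn1 hn] at hk
  linear_combination hk

include hup heq hphi in
lemma fact_nn1 (hn : 2 ≤ n) : u ⟨n, by omega⟩ ⟨n+1, by omega⟩ = 0 := by
  have hk := key n hn u heq ⟨1, by omega⟩ ⟨n+1, by omega⟩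
  rw [sg_spec1 hn, sg_specn1 hn] at hk
  rw [hphi] at hk
  simpa using hk

end Struct


section More
variable {n : ℕ} (u : Matrix (Fin (n+2)) (Fin (n+2)) ℂ)
  (hup : ∀ i j : Fin (n+2), (j:ℕ) ≤ (i:ℕ) → u i j = 0)
  (heq : u.conjTranspose * Jmat n + Jmat n * u = 0)
  (hphi : u ⟨0, by omega⟩ ⟨1, by omega⟩ = 0)

include hup heq hphi in
lemma usq_0n (hn : 2 ≤ n) :
    (u * u) ⟨0, by omega⟩ ⟨n, by omega⟩ = -dotC n (xV n u) (yV n u) := by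
  rw [Matrix.mul_apply]
  have hptw : ∀ k : Fin (n+2), u ⟨0, by omega⟩ k * u k ⟨n, by omega⟩
      = -(xV n u k * (starRingEnd ℂ) (yV n u k)) := by
    intro k
    by_cases h : 2 ≤ (k:ℕ) ∧ (k:ℕ)+1 ≤ n
    · simp only [xV, yV, if_pos h]
      rw [fact_kn u hup heq hn k h.1 h.2]
      ring
    · simp only [xV, yV, if_neg h]
      have hk2 := k.2
      have hcase : (k:ℕ) = 0 ∨ (k:ℕ) = 1 ∨ (k:ℕ) = n ∨ (k:ℕ) = n+1 := by omega
      rcases hcase with h0 | h0 | h0 | h0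
      · rw [hup ⟨0, by omega⟩ k (by omega), zero_mul]; simp
      · have : k = ⟨1, by omega⟩ := Fin.ext h0
        rw [this, hphi, zero_mul]; simp
      · rw [hup k ⟨n, by omega⟩ (by show n ≤ (k:ℕ); omega), mul_zero]; simp
      · rw [hup k ⟨n, by omega⟩ (by show n ≤ (k:ℕ); omega), mul_zero]; simp
  rw [Finset.sum_congr rfl (fun k _ => hptw k)]
  rw [dotC, ← Finset.sum_neg_distrib]

include hup heq hphi in
lemma usq_0n1 (hn : 2 ≤ n) :
    (u * u) ⟨0, by omega⟩ ⟨n+1, by omega⟩ = -((nsqR n (xV n u) : ℝ) : ℂ) := by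
  rw [Matrix.mul_apply]
  have hptw : ∀ k : Fin (n+2), u ⟨0, by omega⟩ k * u k ⟨n+1, by omega⟩
      = -((Complex.normSq (xV n u k) : ℝ) : ℂ) := by
    intro k
    by_cases h : 2 ≤ (k:ℕ) ∧ (k:ℕ)+1 ≤ n
    · simp only [xV, if_pos h]
      rw [fact_kn1 u hup heq hn k h.1 h.2, ← Complex.mul_conj]
      ring
    · simp only [xV, if_neg h]
      have hk2 := k.2
      have hcase : (k:ℕ) = 0 ∨ (k:ℕ) = 1 ∨ (k:ℕ) = n ∨ (k:ℕ) = n+1 := by omega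
      rcases hcase with h0 | h0 | h0 | h0
      · rw [hup ⟨0, by omega⟩ k (by omega), zero_mul]; simp
      · have : k = ⟨1, by omega⟩ := Fin.ext h0
        rw [this, hphi, zero_mul]; simp
      · have : k = ⟨n, by omega⟩ := Fin.ext h0
        rw [this, fact_nn1 u hup heq hphi hn, mul_zero]; simp
      · rw [hup k ⟨n+1, by omega⟩ (by show n+1 ≤ (k:ℕ); omega), mul_zero]; simp
  rw [Finset.sum_congr rfl (fun k _ => hptw k)]
  rw [Finset.sum_neg_distrib, nsqR, Complex.ofReal_sum]

include hup heq in
lemma usq_1n (hn : 2 ≤ n) :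
    (u * u) ⟨1, by omega⟩ ⟨n, by omega⟩ = -((nsqR n (yV n u) : ℝ) : ℂ) := by
  rw [Matrix.mul_apply]
  have hptw : ∀ k : Fin (n+2), u ⟨1, by omega⟩ k * u k ⟨n, by omega⟩
      = -((Complex.normSq (yV n u k) : ℝ) : ℂ) := by
    intro k
    by_cases h : 2 ≤ (k:ℕ) ∧ (k:ℕ)+1 ≤ n
    · simp only [yV, if_pos h]
      rw [fact_kn u hup heq hn k h.1 h.2, ← Complex.mul_conj]
      ring
    · simp only [yV, if_neg h]
      have hk2 := k.2
      have hcase : (k:ℕ) = 0 ∨ (k:ℕ) = 1 ∨ (k:ℕ) = n ∨ (k:ℕ) = n+1 := by omega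
      rcases hcase with h0 | h0 | h0 | h0
      · rw [hup ⟨1, by omega⟩ k (by show (k:ℕ) ≤ 1; omega), zero_mul]; simp
      · rw [hup ⟨1, by omega⟩ k (by show (k:ℕ) ≤ 1; omega), zero_mul]; simp
      · rw [hup k ⟨n, by omega⟩ (by show n ≤ (k:ℕ); omega), mul_zero]; simp
      · rw [hup k ⟨n, by omega⟩ (by show n ≤ (k:ℕ); omega), mul_zero]; simp
  rw [Finset.sum_congr rfl (fun k _ => hptw k)]
  rw [Finset.sum_neg_distrib, nsqR, Complex.ofReal_sum]

include hup heq hphi in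
lemma usq_1n1 (hn : 2 ≤ n) :
    (u * u) ⟨1, by omega⟩ ⟨n+1, by omega⟩
      = -(starRingEnd ℂ) (dotC n (xV n u) (yV n u)) := by
  rw [Matrix.mul_apply]
  have hptw : ∀ k : Fin (n+2), u ⟨1, by omega⟩ k * u k ⟨n+1, by omega⟩
      = -(yV n u k * (starRingEnd ℂ) (xV n u k)) := by
    intro k
    by_cases h : 2 ≤ (k:ℕ) ∧ (k:ℕ)+1 ≤ n
    · simp only [xV, yV, if_pos h]
      rw [fact_kn1 u hup heq hn k h.1 h.2]
      ring
    · simp only [xV, yV, if_neg h]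
      have hk2 := k.2
      have hcase : (k:ℕ) = 0 ∨ (k:ℕ) = 1 ∨ (k:ℕ) = n ∨ (k:ℕ) = n+1 := by omega
      rcases hcase with h0 | h0 | h0 | h0
      · rw [hup ⟨1, by omega⟩ k (by show (k:ℕ) ≤ 1; omega), zero_mul]; simp
      · rw [hup ⟨1, by omega⟩ k (by show (k:ℕ) ≤ 1; omega), zero_mul]; simp
      · have : k = ⟨n, by omega⟩ := Fin.ext h0
        rw [this, fact_nn1 u hup heq hphi hn, mul_zero]; simp
      · rw [hup k ⟨n+1, by omega⟩ (by show n+1 ≤ (k:ℕ); omega), mul_zero]; simp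
  rw [Finset.sum_congr rfl (fun k _ => hptw k)]
  rw [Finset.sum_neg_distrib]
  congr 1
  rw [dotC, map_sum]
  apply Finset.sum_congr rfl
  intro j _
  simp only [map_mul, Complex.conj_conj]
  ring

include hup heq hphi in
lemma usq_row (hn : 2 ≤ n) (k j : Fin (n+2)) (hk2 : 2 ≤ (k:ℕ)) :
    (u * u) k j = 0 := by
  rw [Matrix.mul_apply]
  apply Finset.sum_eq_zero
  intro l _
  rcases le_or_gt (l:ℕ) (k:ℕ) with h | h
  · rw [hup k l h, zero_mul]
  · have hl2 := l.2
    rcases lt_or_ge ((l:ℕ)) (n) with h2 | h2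
    · rw [fact_int u hup heq hn k l hk2 (by omega) (by omega) (by omega), zero_mul]
    · have hcase : (l:ℕ) = n ∨ (l:ℕ) = n+1 := by omega
      rcases hcase with h3 | h3
      · rcases le_or_gt ((j:ℕ)) n with h4 | h4
        · rw [hup l j (by omega), mul_zero]
        · have hj2 := j.2
          have hl : l = ⟨n, by omega⟩ := Fin.ext h3
          have hjj : j = ⟨n+1, by omega⟩ := Fin.ext (by show (j:ℕ) = n+1; omega)
          rw [hl, hjj, fact_nn1 u hup heq hphi hn, mul_zero]
      · have hj2 := j.2
        rw [hup l j (by omega), mul_zero]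

include hup heq hphi in
lemma ucube (hn : 2 ≤ n) : u * u * u = 0 := by
  rw [mul_assoc]
  ext i j
  rw [Matrix.mul_apply, Matrix.zero_apply]
  apply Finset.sum_eq_zero
  intro k _
  rcases le_or_gt 2 ((k:ℕ)) with h | h
  · rw [usq_row u hup heq hphi hn k j h, mul_zero]
  · have hcase : (k:ℕ) = 0 ∨ (k:ℕ) = 1 := by omega
    rcases hcase with h0 | h0
    · rw [hup i k (by omega), zero_mul]
    · rcases Nat.eq_zero_or_pos (i:ℕ) with h1 | h1
      · have hi : i = ⟨0, by omega⟩ := Fin.ext h1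
        have hkk : k = ⟨1, by omega⟩ := Fin.ext h0
        rw [hi, hkk, hphi, zero_mul]
      · rw [hup i k (by omega), zero_mul]

end More

lemma exp_cube {m : ℕ} (A : Matrix (Fin (m+2)) (Fin (m+2)) ℂ) (h3 : A * A * A = 0) :
    NormedSpace.exp A = 1 + A + (2⁻¹ : ℂ) • (A * A) := by
  have h3' : A ^ 3 = 0 := by
    rw [pow_succ, pow_two]; exact h3
  simp only [NormedSpace.exp_eq_tsum (𝕂 := ℂ)]
  rw [tsum_eq_sum (s := Finset.range 3) ?_]
  · rw [Finset.sum_range_succ, Finset.sum_range_succ, Finset.sum_range_one]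
    norm_num [pow_two]
  · intro k hk
    have hk3 : 3 ≤ k := by
      by_contra hc
      exact hk (Finset.mem_range.mpr (by omega))
    have hA : A ^ k = 0 := by
      have : A ^ k = A ^ 3 * A ^ (k - 3) := by rw [← pow_add]; congr 1; omega
      rw [this, h3', zero_mul]
    rw [hA, smul_zero]

lemma nsq_pos {n : ℕ} (x : Fin (n+2) → ℂ) (hx : x ≠ 0) : 0 < nsqR n x := by
  obtain ⟨j, hj⟩ : ∃ j, x j ≠ 0 := by
    by_contra h
    push_neg at h
    exact hx (funext h)
  exact Finset.sum_pos' (fun i _ => Complex.normSq_nonneg _)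
    ⟨j, Finset.mem_univ j, Complex.normSq_pos.mpr hj⟩

lemma nsq_nonneg {n : ℕ} (x : Fin (n+2) → ℂ) : 0 ≤ nsqR n x :=
  Finset.sum_nonneg (fun i _ => Complex.normSq_nonneg _)

lemma dot_conj {n : ℕ} (x y : Fin (n+2) → ℂ) :
    dotC n y x = (starRingEnd ℂ) (dotC n x y) := by
  rw [dotC, dotC, map_sum]
  apply Finset.sum_congr rfl
  intro j _
  simp only [map_mul, Complex.conj_conj]
  ring

lemma cs_key {n : ℕ} (x y : Fin (n+2) → ℂ) :
    ((nsqR n (fun j => ((nsqR n y : ℝ) : ℂ) * x j - dotC n x y * y j) : ℝ) : ℂ)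
      = ((nsqR n y : ℝ) : ℂ)
        * (((nsqR n y : ℝ) : ℂ) * ((nsqR n x : ℝ) : ℂ)
          - ((Complex.normSq (dotC n x y) : ℝ) : ℂ)) := by
  set Y : ℂ := ((nsqR n y : ℝ) : ℂ) with hY
  set p : ℂ := dotC n x y with hp
  have e0 : ((nsqR n (fun j => Y * x j - p * y j) : ℝ) : ℂ)
      = ∑ j, (Y * x j - p * y j) * (starRingEnd ℂ) (Y * x j - p * y j) := by
    rw [nsqR, Complex.ofReal_sum]
    apply Finset.sum_congr rfl
    intro j _
    rw [Complex.mul_conj]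
  rw [e0]
  have e1 : ∀ j : Fin (n+2), (Y * x j - p * y j) * (starRingEnd ℂ) (Y * x j - p * y j)
      = Y^2 * (x j * (starRingEnd ℂ) (x j))
        - Y * (starRingEnd ℂ) p * (x j * (starRingEnd ℂ) (y j))
        - Y * p * (y j * (starRingEnd ℂ) (x j))
        + (p * (starRingEnd ℂ) p) * (y j * (starRingEnd ℂ) (y j)) := by
    intro j
    have hYc : (starRingEnd ℂ) Y = Y := by rw [hY, Complex.conj_ofReal]
    simp only [map_sub, map_mul, hYc]
    ring
  rw [Finset.sum_congr rfl (fun j _ => e1 j)]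
  have hsx : ∑ j, x j * (starRingEnd ℂ) (x j) = ((nsqR n x : ℝ) : ℂ) := by
    rw [nsqR, Complex.ofReal_sum]
    exact Finset.sum_congr rfl (fun j _ => Complex.mul_conj (x j))
  have hsy : ∑ j, y j * (starRingEnd ℂ) (y j) = Y := by
    rw [hY, nsqR, Complex.ofReal_sum]
    exact Finset.sum_congr rfl (fun j _ => Complex.mul_conj (y j))
  have hsxy : ∑ j, x j * (starRingEnd ℂ) (y j) = p := by rw [hp, dotC]
  have hsyx : ∑ j, y j * (starRingEnd ℂ) (x j) = (starRingEnd ℂ) p := by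
    rw [hp, ← dot_conj, dotC]
  have hpp : p * (starRingEnd ℂ) p = ((Complex.normSq p : ℝ) : ℂ) := Complex.mul_conj p
  simp only [Finset.sum_add_distrib, Finset.sum_sub_distrib, ← Finset.mul_sum]
  rw [hsx, hsy, hsxy, hsyx, hpp]
  linear_combination (-2*Y) * hpp

end Aux



namespace Aux

lemma exp_entry {n : ℕ} (u : Matrix (Fin (n+2)) (Fin (n+2)) ℂ) (hcube : u * u * u = 0)
    (t : ℝ) (i j : Fin (n+2)) :
    (NormedSpace.exp (t • u)) i j
      = (if i = j then 1 else 0) + (t:ℂ) * u i j + ((t:ℂ)^2/2) * (u*u) i j := by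
  have h3 : (t • u) * (t • u) * (t • u) = 0 := by
    simp only [smul_mul_assoc, mul_smul_comm, hcube, smul_zero]
  rw [exp_cube _ h3]
  simp only [Matrix.add_apply, Matrix.one_apply, Matrix.smul_apply, smul_mul_assoc,
    mul_smul_comm, smul_smul, smul_eq_mul, Complex.real_smul]
  push_cast
  ring

lemma entry_le_entryNorm {n : ℕ} (h : Matrix (Fin (n+2)) (Fin (n+2)) ℂ) (i j : Fin (n+2)) :
    ‖h i j‖ ≤ entryNorm n h :=
  Finset.le_sup' (fun p : Fin (n+2) × Fin (n+2) => ‖h p.1 p.2‖)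
    (Finset.mem_univ (i, j))

lemma entryNorm_nonneg {n : ℕ} (h : Matrix (Fin (n+2)) (Fin (n+2)) ℂ) :
    0 ≤ entryNorm n h :=
  le_trans (norm_nonneg _) (entry_le_entryNorm h 0 0)

lemma rho_le {n : ℕ} (h : Matrix (Fin (n+2)) (Fin (n+2)) ℂ) :
    rhoNorm n h ≤ 2 * (entryNorm n h)^2 := by
  apply Finset.sup'_le
  rintro ⟨⟨a, b⟩, c, e⟩ -
  show ‖h a c * h b e - h a e * h b c‖ ≤ _
  have h1 := entry_le_entryNorm h a c
  have h2 := entry_le_entryNorm h b e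
  have h3 := entry_le_entryNorm h a e
  have h4 := entry_le_entryNorm h b c
  have h0 := entryNorm_nonneg h
  have habs : ‖h a c * h b e - h a e * h b c‖
      ≤ ‖h a c‖ * ‖h b e‖
        + ‖h a e‖ * ‖h b c‖ := by
    calc ‖h a c * h b e - h a e * h b c‖
        ≤ ‖h a c * h b e‖ + ‖h a e * h b c‖ := by
          rw [sub_eq_add_neg]
          refine le_trans (norm_add_le _ _) (le_of_eq ?_)
          rw [norm_neg]
      _ = _ := by rw [norm_mul, norm_mul]
  nlinarith [norm_nonneg (h a c), norm_nonneg (h b e),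
    norm_nonneg (h a e), norm_nonneg (h b c)]

lemma delta_le_rho {n : ℕ} (h : Matrix (Fin (n+2)) (Fin (n+2)) ℂ) :
    ‖DeltaC n h‖ ≤ rhoNorm n h := by
  unfold rhoNorm DeltaC
  exact Finset.le_sup' (fun q : (Fin (n+2) × Fin (n+2)) × Fin (n+2) × Fin (n+2) =>
      ‖h q.1.1 q.2.1 * h q.1.2 q.2.2 - h q.1.1 q.2.2 * h q.1.2 q.2.1‖)
    (Finset.mem_univ (((⟨0, by omega⟩ : Fin (n+2)), (⟨1, by omega⟩ : Fin (n+2))),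
      ((⟨n, by omega⟩ : Fin (n+2)), (⟨n+1, by omega⟩ : Fin (n+2)))))

lemma entryNorm_exp_le {n : ℕ} (u : Matrix (Fin (n+2)) (Fin (n+2)) ℂ)
    (hcube : u * u * u = 0) (t : ℝ) (ht : 1 ≤ t) :
    entryNorm n (NormedSpace.exp (t • u))
      ≤ (1 + entryNorm n u + entryNorm n (u*u)/2) * t^2 := by
  apply Finset.sup'_le
  rintro ⟨i, j⟩ -
  show ‖(NormedSpace.exp (t • u)) i j‖ ≤ _
  rw [exp_entry u hcube t i j]
  have ht0 : (0:ℝ) ≤ t := le_trans zero_le_one ht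
  have e1 : ‖if i = j then (1:ℂ) else 0‖ ≤ 1 := by split_ifs <;> simp
  have e2 := entry_le_entryNorm u i j
  have e3 := entry_le_entryNorm (u*u) i j
  have h0 : (0:ℝ) ≤ entryNorm n u := entryNorm_nonneg u
  have h0' : (0:ℝ) ≤ entryNorm n (u*u) := entryNorm_nonneg (u*u)
  have habs : ‖(if i = j then (1:ℂ) else 0) + (t:ℂ) * u i j
        + ((t:ℂ)^2/2) * (u*u) i j‖
      ≤ 1 + t * ‖u i j‖ + t^2/2 * ‖(u*u) i j‖ := by
    refine le_trans (norm_add_le _ _) ?_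
    have hA : ‖(if i = j then (1:ℂ) else 0) + (t:ℂ) * u i j‖
        ≤ 1 + t * ‖u i j‖ := by
      refine le_trans (norm_add_le _ _) ?_
      have hmul : ‖(t:ℂ) * u i j‖ = t * ‖u i j‖ := by
        rw [norm_mul, Complex.norm_real, Real.norm_eq_abs, abs_of_nonneg ht0]
      rw [hmul]
      linarith [e1]
    have hB : ‖((t:ℂ)^2/2) * (u*u) i j‖ = t^2/2 * ‖(u*u) i j‖ := by
      rw [norm_mul, norm_div, norm_pow, Complex.norm_real, Real.norm_eq_abs, abs_of_nonneg ht0]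
      norm_num
    rw [hB]
    linarith [hA]
  have htt : t ≤ t^2 := by nlinarith
  have h1t : (1:ℝ) ≤ t^2 := by nlinarith
  have q1 : t * ‖u i j‖ ≤ t^2 * entryNorm n u := by
    have := norm_nonneg (u i j)
    nlinarith
  have q2 : t^2/2 * ‖(u*u) i j‖ ≤ t^2 * (entryNorm n (u*u) / 2) := by
    have := norm_nonneg ((u*u) i j)
    nlinarith
  nlinarith [habs]

end Aux

set_option maxHeartbeats 1000000 in
theorem stmt1 (n : ℕ) (hn : 2 ≤ n)
    (𝔥 : Submodule ℝ (Matrix (Fin (n+2)) (Fin (n+2)) ℂ))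
    (h_sub : ∀ u ∈ 𝔥, inLieN n u)
    (h_bracket : ∀ u ∈ 𝔥, ∀ v ∈ 𝔥, u * v - v * u ∈ 𝔥)
    (u : Matrix (Fin (n+2)) (Fin (n+2)) ℂ) (hu : u ∈ 𝔥)
    (hphi : phiC n u = 0)
    (hind : LinearIndependent ℂ ![xV n u, yV n u]) :
    ∃ (h : ℕ → Matrix (Fin (n+2)) (Fin (n+2)) ℂ) (c C : ℝ),
      0 < c ∧ 0 < C ∧ (∀ m, h m ∈ expSet n 𝔥) ∧
      Filter.Tendsto (fun m => entryNorm n (h m)) Filter.atTop Filter.atTop ∧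
      ∀ m, c * (entryNorm n (h m))^2 ≤ rhoNorm n (h m) ∧
        rhoNorm n (h m) ≤ C * (entryNorm n (h m))^2 := by
  classical
  obtain ⟨hup, heq⟩ := h_sub u hu
  have hphi' : u ⟨0, by omega⟩ ⟨1, by omega⟩ = 0 := hphi
  have hcube : u * u * u = 0 := Aux.ucube u hup heq hphi' hn
  -- abbreviations via opaque constants
  obtain ⟨X, hX⟩ : ∃ r : ℝ, r = nsqR n (xV n u) := ⟨_, rfl⟩
  obtain ⟨Y, hY⟩ : ∃ r : ℝ, r = nsqR n (yV n u) := ⟨_, rfl⟩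
  obtain ⟨p, hp⟩ : ∃ z : ℂ, z = dotC n (xV n u) (yV n u) := ⟨_, rfl⟩
  -- linear independence consequences
  rw [linearIndependent_fin2] at hind
  simp only [Matrix.cons_val_one, Matrix.head_cons, Matrix.cons_val_zero] at hind
  obtain ⟨hy0, hax⟩ := hind
  have hYpos : 0 < Y := by rw [hY]; exact Aux.nsq_pos _ hy0
  have hXnn : 0 ≤ X := by rw [hX]; exact Aux.nsq_nonneg _
  have hw : (fun j => ((Y : ℝ) : ℂ) * xV n u j - p * yV n u j) ≠ 0 := by
    intro hzero
    have hYne : ((Y:ℝ):ℂ) ≠ 0 := by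
      simp only [ne_eq, Complex.ofReal_eq_zero]
      exact ne_of_gt hYpos
    apply hax (p / ((Y:ℝ):ℂ))
    funext j
    have hj : ((Y:ℝ):ℂ) * xV n u j - p * yV n u j = 0 := congrFun hzero j
    show (p / ((Y:ℝ):ℂ)) * yV n u j = xV n u j
    field_simp
    linear_combination -hj
  have hwpos : 0 < nsqR n (fun j => ((Y : ℝ) : ℂ) * xV n u j - p * yV n u j) :=
    Aux.nsq_pos _ hw
  have hcs := Aux.cs_key (xV n u) (yV n u)
  rw [← hX, ← hY, ← hp] at hcs
  have hcsR : nsqR n (fun j => ((Y : ℝ) : ℂ) * xV n u j - p * yV n u j)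
      = Y * (Y * X - Complex.normSq p) := by
    have h2 : ((nsqR n (fun j => ((Y : ℝ) : ℂ) * xV n u j - p * yV n u j) : ℝ) : ℂ)
        = (((Y * (Y * X - Complex.normSq p)) : ℝ) : ℂ) := by
      rw [hcs]; push_cast; ring
    exact_mod_cast h2
  have hd : 0 < X * Y - Complex.normSq p := by nlinarith [hwpos, hcsR, hYpos]
  have hXpos : 0 < X := by nlinarith [Complex.normSq_nonneg p, hYpos]
  -- index disequalities
  have ne0n : ((⟨0, by omega⟩ : Fin (n+2))) ≠ ⟨n, by omega⟩ :=
    Fin.ne_of_val_ne (by show 0 ≠ n; omega)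
  have ne0n1 : ((⟨0, by omega⟩ : Fin (n+2))) ≠ ⟨n+1, by omega⟩ :=
    Fin.ne_of_val_ne (by show 0 ≠ n+1; omega)
  have ne1n : ((⟨1, by omega⟩ : Fin (n+2))) ≠ ⟨n, by omega⟩ :=
    Fin.ne_of_val_ne (by show 1 ≠ n; omega)
  have ne1n1 : ((⟨1, by omega⟩ : Fin (n+2))) ≠ ⟨n+1, by omega⟩ :=
    Fin.ne_of_val_ne (by show 1 ≠ n+1; omega)
  -- the Delta polynomial identity
  obtain ⟨c3, c2, hDelta⟩ : ∃ c3 c2 : ℂ, ∀ t : ℝ,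
      DeltaC n (NormedSpace.exp (t • u))
        = (((-((X * Y - Complex.normSq p) * t^4/4)) : ℝ) : ℂ)
          + (((t:ℝ):ℂ)^3 * c3 + ((t:ℝ):ℂ)^2 * c2) := by
    refine ⟨(u ⟨0, by omega⟩ ⟨n+1, by omega⟩ * ((Y:ℝ):ℂ)
        + ((X:ℝ):ℂ) * u ⟨1, by omega⟩ ⟨n, by omega⟩
        - u ⟨0, by omega⟩ ⟨n, by omega⟩ * (starRingEnd ℂ) p
        - p * u ⟨1, by omega⟩ ⟨n+1, by omega⟩)/2,
      u ⟨0, by omega⟩ ⟨n, by omega⟩ * u ⟨1, by omega⟩ ⟨n+1, by omega⟩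
        - u ⟨0, by omega⟩ ⟨n+1, by omega⟩ * u ⟨1, by omega⟩ ⟨n, by omega⟩, ?_⟩
    intro t
    unfold DeltaC
    rw [Aux.exp_entry u hcube t, Aux.exp_entry u hcube t,
      Aux.exp_entry u hcube t, Aux.exp_entry u hcube t]
    rw [if_neg ne0n, if_neg ne0n1, if_neg ne1n, if_neg ne1n1]
    rw [Aux.usq_0n u hup heq hphi' hn, Aux.usq_0n1 u hup heq hphi' hn,
      Aux.usq_1n u hup heq hn, Aux.usq_1n1 u hup heq hphi' hn]
    rw [← hX, ← hY, ← hp]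
    have hns : ((Complex.normSq p : ℝ) : ℂ) = p * (starRingEnd ℂ) p := (Complex.mul_conj p).symm
    push_cast
    rw [hns]
    ring
  -- constants
  obtain ⟨S, hS⟩ : ∃ r : ℝ, r = entryNorm n u := ⟨_, rfl⟩
  obtain ⟨S', hS'⟩ : ∃ r : ℝ, r = entryNorm n (u*u) := ⟨_, rfl⟩
  have hSnn : 0 ≤ S := by rw [hS]; exact Aux.entryNorm_nonneg u
  have hS'nn : 0 ≤ S' := by rw [hS']; exact Aux.entryNorm_nonneg (u*u)
  have hE0pos : 0 < 1 + S + S'/2 := by linarith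
  obtain ⟨B, hB⟩ : ∃ r : ℝ, r = ‖u ⟨0, by omega⟩ ⟨n+1, by omega⟩‖ := ⟨_, rfl⟩
  have hBnn : 0 ≤ B := by rw [hB]; exact norm_nonneg _
  obtain ⟨K, hK⟩ : ∃ r : ℝ, r = ‖c3‖ + ‖c2‖ := ⟨_, rfl⟩
  have hKnn : 0 ≤ K := by
    rw [hK]
    have := norm_nonneg c3
    have := norm_nonneg c2
    linarith
  set d : ℝ := X * Y - Complex.normSq p with hd_def
  clear_value d
  -- choose T
  obtain ⟨T, hT⟩ : ∃ T : ℕ, 1 + 8*K/d + 4*B/X ≤ (T:ℝ) := exists_nat_ge _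
  have hTlarge : ∀ m : ℕ, (1:ℝ) ≤ (m:ℝ) + T ∧ 8*K ≤ d * ((m:ℝ) + T)
      ∧ 4*B ≤ X * ((m:ℝ) + T) := by
    intro m
    have hm : (0:ℝ) ≤ (m:ℝ) := Nat.cast_nonneg m
    have h8K : 0 ≤ 8*K/d := by positivity
    have h4B : 0 ≤ 4*B/X := by positivity
    have ht : 1 + 8*K/d + 4*B/X ≤ (m:ℝ) + T := by linarith
    refine ⟨by linarith, ?_, ?_⟩
    · have : 8*K/d ≤ (m:ℝ) + T := by linarith
      calc 8*K = d * (8*K/d) := by field_simp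
        _ ≤ d * ((m:ℝ) + T) := by
            apply mul_le_mul_of_nonneg_left this (le_of_lt hd)
    · have : 4*B/X ≤ (m:ℝ) + T := by linarith
      calc 4*B = X * (4*B/X) := by field_simp
        _ ≤ X * ((m:ℝ) + T) := by
            apply mul_le_mul_of_nonneg_left this (le_of_lt hXpos)
  -- the sequence
  refine ⟨fun m => NormedSpace.exp (((m:ℝ) + T) • u), d/(8*(1 + S + S'/2)^2), 2,
    by positivity, by norm_num, ?_, ?_, ?_⟩
  · intro m
    exact ⟨((m:ℝ) + T) • u, 𝔥.smul_mem _ hu, rfl⟩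
  · -- tendsto
    have hlow : ∀ m : ℕ, X/4 * (m:ℝ)
        ≤ entryNorm n (NormedSpace.exp (((m:ℝ) + T) • u)) := by
      intro m
      obtain ⟨ht1, _, htB⟩ := hTlarge m
      have hentry := Aux.exp_entry u hcube ((m:ℝ) + T) ⟨0, by omega⟩ ⟨n+1, by omega⟩
      rw [if_neg ne0n1, Aux.usq_0n1 u hup heq hphi' hn, ← hX] at hentry
      have hge := Aux.entry_le_entryNorm (NormedSpace.exp (((m:ℝ) + T) • u))
        ⟨0, by omega⟩ ⟨n+1, by omega⟩
      rw [hentry] at hge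
      set t : ℝ := (m:ℝ) + T with ht_def
      clear_value t
      have ht0 : (0:ℝ) ≤ t := by linarith
      have habs1 : ‖(((t:ℝ):ℂ)^2/2) * (-((X:ℝ):ℂ))‖ = t^2/2 * X := by
        rw [norm_mul, norm_div, norm_pow, Complex.norm_real, Real.norm_eq_abs, norm_neg,
          Complex.norm_real, Real.norm_eq_abs, abs_of_nonneg ht0, abs_of_nonneg hXnn]
        norm_num
      have habs2 : ‖(0:ℂ) + ((t:ℝ):ℂ) * u ⟨0, by omega⟩ ⟨n+1, by omega⟩‖
          = t * B := by
        rw [zero_add, norm_mul, Complex.norm_real, Real.norm_eq_abs, abs_of_nonneg ht0, hB]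
      have keyabs : t^2/2 * X - t * B
          ≤ ‖(0:ℂ) + ((t:ℝ):ℂ) * u ⟨0, by omega⟩ ⟨n+1, by omega⟩
            + (((t:ℝ):ℂ)^2/2) * (-((X:ℝ):ℂ))‖ := by
        have htri := norm_add_le
          ((0:ℂ) + ((t:ℝ):ℂ) * u ⟨0, by omega⟩ ⟨n+1, by omega⟩
            + (((t:ℝ):ℂ)^2/2) * (-((X:ℝ):ℂ)))
          (-((0:ℂ) + ((t:ℝ):ℂ) * u ⟨0, by omega⟩ ⟨n+1, by omega⟩))
        have e2 : ((0:ℂ) + ((t:ℝ):ℂ) * u ⟨0, by omega⟩ ⟨n+1, by omega⟩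
              + (((t:ℝ):ℂ)^2/2) * (-((X:ℝ):ℂ)))
              + -((0:ℂ) + ((t:ℝ):ℂ) * u ⟨0, by omega⟩ ⟨n+1, by omega⟩)
            = (((t:ℝ):ℂ)^2/2) * (-((X:ℝ):ℂ)) := by ring
        rw [e2, habs1, norm_neg, habs2] at htri
        linarith
      have hfin : X/4 * (m:ℝ) ≤ t^2/2 * X - t * B := by
        have hmt : (m:ℝ) ≤ t := by rw [ht_def]; linarith [Nat.cast_nonneg (α := ℝ) T]
        have htt : t ≤ t^2 := by nlinarith
        have hXm : X * (m:ℝ) ≤ X * t := mul_le_mul_of_nonneg_left hmt hXnn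
        have hXt : X * t ≤ X * t^2 := mul_le_mul_of_nonneg_left htt hXnn
        have h4 : t * (4*B) ≤ t * (X*t) := mul_le_mul_of_nonneg_left htB ht0
        nlinarith [hXm, hXt, h4]
      linarith [keyabs, hge, hfin]
    apply Filter.tendsto_atTop_mono hlow
    exact Filter.Tendsto.const_mul_atTop (by positivity) tendsto_natCast_atTop_atTop
  · -- the two-sided bound
    intro m
    beta_reduce
    obtain ⟨ht1, htK, _⟩ := hTlarge m
    set t : ℝ := (m:ℝ) + T with ht_def
    clear_value t
    have ht0 : (0:ℝ) ≤ t := by linarith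
    constructor
    · -- lower bound
      have hup1 : entryNorm n (NormedSpace.exp (t • u)) ≤ (1 + S + S'/2) * t^2 := by
        have := Aux.entryNorm_exp_le u hcube t ht1
        rw [← hS, ← hS'] at this
        exact this
      have hdel : d/8 * t^4 ≤ ‖DeltaC n (NormedSpace.exp (t • u))‖ := by
        rw [hDelta t]
        have a1 : ‖(((-(d * t^4/4)) : ℝ) : ℂ)‖ = d * t^4/4 := by
          rw [Complex.norm_real, Real.norm_eq_abs, abs_neg,
            abs_of_nonneg (div_nonneg (mul_nonneg hd.le (by positivity)) (by norm_num))]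
        have a2 : ‖((t:ℝ):ℂ)^3 * c3 + ((t:ℝ):ℂ)^2 * c2‖
            ≤ ‖c3‖ * t^3 + ‖c2‖ * t^2 := by
          refine le_trans (norm_add_le _ _) (le_of_eq ?_)
          rw [norm_mul, norm_mul, norm_pow, norm_pow, Complex.norm_real, Real.norm_eq_abs, abs_of_nonneg ht0]
          ring
        have a3 := norm_add_le
          (((((-(d * t^4/4)) : ℝ) : ℂ))
            + (((t:ℝ):ℂ)^3 * c3 + ((t:ℝ):ℂ)^2 * c2))
          (-(((t:ℝ):ℂ)^3 * c3 + ((t:ℝ):ℂ)^2 * c2))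
        rw [add_neg_cancel_right, norm_neg, a1] at a3
        have htt : t^2 ≤ t^3 := by nlinarith
        have hKt : (‖c3‖ + ‖c2‖) * t^3 ≤ d/8 * t^4 := by
          have ht3 : (0:ℝ) ≤ t^3 := by positivity
          have h8 := mul_le_mul_of_nonneg_right htK ht3
          rw [hK] at h8
          linarith [h8]
        have hc2t : ‖c2‖ * t^2 ≤ ‖c2‖ * t^3 :=
          mul_le_mul_of_nonneg_left htt (norm_nonneg c2)
        linarith [a3, a2, hKt, hc2t]
      have hrho := Aux.delta_le_rho (NormedSpace.exp (t • u))
      have hsq : (entryNorm n (NormedSpace.exp (t • u)))^2 ≤ ((1 + S + S'/2) * t^2)^2 := by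
        apply pow_le_pow_left₀ (Aux.entryNorm_nonneg _) hup1
      have heq2 : d/(8*(1 + S + S'/2)^2) * ((1 + S + S'/2) * t^2)^2 = d/8 * t^4 := by
        field_simp
      calc d/(8*(1 + S + S'/2)^2) * (entryNorm n (NormedSpace.exp (t • u)))^2
          ≤ d/(8*(1 + S + S'/2)^2) * ((1 + S + S'/2) * t^2)^2 := by
            apply mul_le_mul_of_nonneg_left hsq (by positivity)
        _ = d/8 * t^4 := heq2
        _ ≤ ‖DeltaC n (NormedSpace.exp (t • u))‖ := hdel
        _ ≤ rhoNorm n (NormedSpace.exp (t • u)) := hrho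
    · -- upper bound
      exact Aux.rho_le _
end
end

section
/- Suppose there is an element z of 𝔷 such that |η_z|² ≠ 𝗑_z·𝗒_z. Then there exist a sequence (h_m) of elements of H and constants c, C > 0 such that ‖h_m‖ → ∞ as m → ∞ and c·‖h_m‖² ≤ ‖ρ(h_m)‖ ≤ C·‖h_m‖² for every m. -/
open scoped BigOperators

noncomputable section

def sigv (n k : ℕ) : ℕ :=
  if k = 0 then n+1 else if k = 1 then n else if k = n then 1 else if k = n+1 then 0 else k

lemma sigv_lt (n k : ℕ) (hk : k < n + 2) : sigv n k < n + 2 := by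
  unfold sigv; split_ifs <;> omega

def sig (n : ℕ) (i : Fin (n+2)) : Fin (n+2) := ⟨sigv n i, sigv_lt n i i.isLt⟩

lemma sigv_invol (n : ℕ) (hn : 2 ≤ n) (k : ℕ) (hk : k < n + 2) : sigv n (sigv n k) = k := by
  unfold sigv; split_ifs <;> first | exact ‹False›.elim | omega

lemma sig_invol (n : ℕ) (hn : 2 ≤ n) (i : Fin (n+2)) : sig n (sig n i) = i :=
  Fin.ext (sigv_invol n hn i i.isLt)

lemma Jmat_eq (n : ℕ) (hn : 2 ≤ n) (i j : Fin (n+2)) :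
    Jmat n i j = if j = sig n i then 1 else 0 := by
  have hi := i.isLt; have hj := j.isLt
  have key : (j = sig n i) ↔ (((i:ℕ) = 0 ∧ (j:ℕ) = n+1) ∨ ((i:ℕ) = 1 ∧ (j:ℕ) = n)
      ∨ ((i:ℕ) = n ∧ (j:ℕ) = 1) ∨ ((i:ℕ) = n+1 ∧ (j:ℕ) = 0)
      ∨ (2 ≤ (i:ℕ) ∧ (i:ℕ) + 1 ≤ n ∧ i = j)) := by
    rw [Fin.ext_iff]
    show (j:ℕ) = sigv n (i:ℕ) ↔ _
    simp only [Fin.ext_iff]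
    unfold sigv
    split_ifs <;> omega
  rw [Jmat]
  simp only [key]

lemma sigrel (n : ℕ) (hn : 2 ≤ n) (z : Matrix (Fin (n+2)) (Fin (n+2)) ℂ)
    (hJ : z.conjTranspose * Jmat n + Jmat n * z = 0) (i j : Fin (n+2)) :
    (starRingEnd ℂ) (z (sig n j) i) + z (sig n i) j = 0 := by
  have h0 := congrFun (congrFun hJ i) j
  rw [Matrix.add_apply, Matrix.zero_apply, Matrix.mul_apply, Matrix.mul_apply] at h0
  have e1 : ∑ k, z.conjTranspose i k * Jmat n k j = (starRingEnd ℂ) (z (sig n j) i) := by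
    rw [Finset.sum_eq_single (sig n j)]
    · rw [Matrix.conjTranspose_apply, Jmat_eq n hn, if_pos (sig_invol n hn j).symm, mul_one]; rfl
    · intro k _ hk
      rw [Jmat_eq n hn, if_neg, mul_zero]
      intro hjk
      exact hk (by rw [hjk, sig_invol n hn])
    · intro hk; exact absurd (Finset.mem_univ _) hk
  have e2 : ∑ k, Jmat n i k * z k j = z (sig n i) j := by
    rw [Finset.sum_eq_single (sig n i)]
    · rw [Jmat_eq n hn, if_pos rfl, one_mul]
    · intro k _ hk; rw [Jmat_eq n hn, if_neg hk, zero_mul]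
    · intro hk; exact absurd (Finset.mem_univ _) hk
  rw [e1, e2] at h0
  exact h0

lemma zpattern (n : ℕ) (hn : 2 ≤ n) (z : Matrix (Fin (n+2)) (Fin (n+2)) ℂ)
    (htri : ∀ i j : Fin (n+2), (j:ℕ) ≤ (i:ℕ) → z i j = 0)
    (hJ : z.conjTranspose * Jmat n + Jmat n * z = 0)
    (hφ : phiC n z = 0) (hx : xV n z = 0) (hy : yV n z = 0) :
    ∀ i j : Fin (n+2), (2 ≤ (i:ℕ) ∨ (j:ℕ) < n) → z i j = 0 := by
  have hzz : ∀ i j : Fin (n+2), z i j = -((starRingEnd ℂ) (z (sig n j) (sig n i))) := by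
    intro i j
    have h := sigrel n hn z hJ (sig n i) j
    rw [sig_invol n hn] at h
    exact (eq_neg_of_add_eq_zero_right h)
  have hx' : ∀ j : Fin (n+2), 2 ≤ (j:ℕ) → (j:ℕ)+1 ≤ n → z ⟨0, by omega⟩ j = 0 := by
    intro j h1 h2
    have := congrFun hx j
    rwa [xV, if_pos ⟨h1, h2⟩, Pi.zero_apply] at this
  have hy' : ∀ j : Fin (n+2), 2 ≤ (j:ℕ) → (j:ℕ)+1 ≤ n → z ⟨1, by omega⟩ j = 0 := by
    intro j h1 h2
    have := congrFun hy j
    rwa [yV, if_pos ⟨h1, h2⟩, Pi.zero_apply] at this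
  intro i j hcond
  have hi2 := i.isLt; have hj2 := j.isLt
  rcases le_or_gt (j:ℕ) (i:ℕ) with h | h
  · exact htri i j h
  rcases lt_or_ge (i:ℕ) 2 with hlt | hge
  · have hjn : (j:ℕ) < n := hcond.resolve_left (by omega)
    by_cases hi0 : (i:ℕ) = 0
    · by_cases hj1 : (j:ℕ) = 1
      · rw [show i = (⟨0, by omega⟩ : Fin (n+2)) from Fin.ext hi0,
            show j = (⟨1, by omega⟩ : Fin (n+2)) from Fin.ext hj1]
        exact hφ
      · rw [show i = (⟨0, by omega⟩ : Fin (n+2)) from Fin.ext hi0]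
        exact hx' j (by omega) (by omega)
    · rw [show i = (⟨1, by omega⟩ : Fin (n+2)) from Fin.ext (show (i:ℕ) = 1 by omega)]
      exact hy' j (by omega) (by omega)
  · have hzz_ij := hzz i j
    rcases lt_trichotomy (j:ℕ) n with hjn | hjn | hjn
    · have e1 : sig n i = i := Fin.ext
        (by show sigv n i = i; unfold sigv; split_ifs <;> first | exact ‹False›.elim | omega)
      have e2 : sig n j = j := Fin.ext
        (by show sigv n j = j; unfold sigv; split_ifs <;> first | exact ‹False›.elim | omega)
      rw [e1, e2, htri j i (le_of_lt h)] at hzz_ij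
      simpa using hzz_ij
    · have e1 : sig n i = i := Fin.ext
        (by show sigv n i = i; unfold sigv; split_ifs <;> first | exact ‹False›.elim | omega)
      have e2 : sig n j = ⟨1, by omega⟩ := Fin.ext
        (by show sigv n j = 1; unfold sigv; split_ifs <;> first | exact ‹False›.elim | omega)
      rw [e1, e2, hy' i hge (by omega)] at hzz_ij
      simpa using hzz_ij
    · have hj : (j:ℕ) = n+1 := by omega
      have e2 : sig n j = ⟨0, by omega⟩ := Fin.ext
        (by show sigv n j = 0; unfold sigv; split_ifs <;> first | exact ‹False›.elim | omega)
      rcases lt_or_ge (i:ℕ) n with hin | hin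
      · have e1 : sig n i = i := Fin.ext
          (by show sigv n i = i; unfold sigv; split_ifs <;> first | exact ‹False›.elim | omega)
        rw [e1, e2, hx' i hge (by omega)] at hzz_ij
        simpa using hzz_ij
      · have hi : (i:ℕ) = n := by omega
        have e1 : sig n i = ⟨1, by omega⟩ := Fin.ext
          (by show sigv n i = 1; unfold sigv; split_ifs <;> first | exact ‹False›.elim | omega)
        have hφ' : z ⟨0, by omega⟩ ⟨1, by omega⟩ = 0 := hφ
        rw [e1, e2, hφ'] at hzz_ij
        simpa using hzz_ij

lemma exp_sq_zero {N : Type*} [Fintype N] [DecidableEq N] (u : Matrix N N ℂ) (h : u * u = 0) :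
    NormedSpace.exp u = 1 + u := by
  rw [NormedSpace.exp_eq_tsum (𝕂 := ℂ)]
  have hpow : ∀ k : ℕ, k ∉ Finset.range 2 → ((k.factorial : ℂ)⁻¹) • u ^ k = 0 := by
    intro k hk
    rw [Finset.mem_range, not_lt] at hk
    obtain ⟨l, rfl⟩ := Nat.exists_eq_add_of_le hk
    rw [pow_add, pow_two, h, zero_mul, smul_zero]
  show (∑' (k : ℕ), ((k.factorial : ℂ)⁻¹) • u ^ k) = 1 + u
  rw [tsum_eq_sum hpow, Finset.sum_range_succ, Finset.sum_range_succ, Finset.sum_range_zero]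
  simp

lemma entry_le (n : ℕ) (h : Matrix (Fin (n+2)) (Fin (n+2)) ℂ) (i j : Fin (n+2)) :
    ‖h i j‖ ≤ entryNorm n h :=
  Finset.le_sup' (fun p : Fin (n+2) × Fin (n+2) => ‖h p.1 p.2‖)
    (Finset.mem_univ (i, j))

lemma minor_le (n : ℕ) (h : Matrix (Fin (n+2)) (Fin (n+2)) ℂ) (i1 i2 j1 j2 : Fin (n+2)) :
    ‖h i1 j1 * h i2 j2 - h i1 j2 * h i2 j1‖ ≤ rhoNorm n h :=
  Finset.le_sup' (fun q : (Fin (n+2) × Fin (n+2)) × Fin (n+2) × Fin (n+2) =>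
      ‖h q.1.1 q.2.1 * h q.1.2 q.2.2 - h q.1.1 q.2.2 * h q.1.2 q.2.1‖)
    (Finset.mem_univ ((i1, i2), (j1, j2)))

lemma rho_le_two_sq (n : ℕ) (h : Matrix (Fin (n+2)) (Fin (n+2)) ℂ) :
    rhoNorm n h ≤ 2 * (entryNorm n h)^2 := by
  have hE0 : (0:ℝ) ≤ entryNorm n h :=
    le_trans (norm_nonneg _) (entry_le n h ⟨0, by omega⟩ ⟨0, by omega⟩)
  apply Finset.sup'_le
  intro q _
  calc ‖h q.1.1 q.2.1 * h q.1.2 q.2.2 - h q.1.1 q.2.2 * h q.1.2 q.2.1‖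
      ≤ ‖h q.1.1 q.2.1 * h q.1.2 q.2.2‖
        + ‖h q.1.1 q.2.2 * h q.1.2 q.2.1‖ := by
        rw [sub_eq_add_neg]
        exact le_trans (norm_add_le _ _) (le_of_eq (by rw [norm_neg]))
    _ = ‖h q.1.1 q.2.1‖ * ‖h q.1.2 q.2.2‖
        + ‖h q.1.1 q.2.2‖ * ‖h q.1.2 q.2.1‖ := by
        rw [norm_mul, norm_mul]
    _ ≤ entryNorm n h * entryNorm n h + entryNorm n h * entryNorm n h :=
        add_le_add
          (mul_le_mul (entry_le n h _ _) (entry_le n h _ _) (norm_nonneg _) hE0)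
          (mul_le_mul (entry_le n h _ _) (entry_le n h _ _) (norm_nonneg _) hE0)
    _ = 2 * (entryNorm n h)^2 := by ring
set_option maxHeartbeats 4000000 in
theorem stmt2 (n : ℕ) (hn : 2 ≤ n)
    (𝔥 : Submodule ℝ (Matrix (Fin (n+2)) (Fin (n+2)) ℂ))
    (h_sub : ∀ u ∈ 𝔥, inLieN n u)
    (h_bracket : ∀ u ∈ 𝔥, ∀ v ∈ 𝔥, u * v - v * u ∈ 𝔥)
    (z : Matrix (Fin (n+2)) (Fin (n+2)) ℂ) (hz : inZ n 𝔥 z)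
    (hne : Complex.normSq (etaC n z) ≠ sxR n z * syR n z) :
    ∃ (h : ℕ → Matrix (Fin (n+2)) (Fin (n+2)) ℂ) (c C : ℝ),
      0 < c ∧ 0 < C ∧ (∀ m, h m ∈ expSet n 𝔥) ∧
      Filter.Tendsto (fun m => entryNorm n (h m)) Filter.atTop Filter.atTop ∧
      ∀ m, c * (entryNorm n (h m))^2 ≤ rhoNorm n (h m) ∧
        rhoNorm n (h m) ≤ C * (entryNorm n (h m))^2 := by
  obtain ⟨hzH, hφ, hx, hy⟩ := hz
  obtain ⟨htri, hJ⟩ := h_sub z hzH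
  have hpat : ∀ i j : Fin (n+2), (2 ≤ (i:ℕ) ∨ (j:ℕ) < n) → z i j = 0 :=
    zpattern n hn z htri hJ hφ hx hy
  have sN : sig n (⟨n, by omega⟩ : Fin (n+2)) = ⟨1, by omega⟩ := Fin.ext
    (by show sigv n n = 1; unfold sigv; split_ifs <;> first | exact ‹False›.elim | omega)
  have sN1 : sig n (⟨n+1, by omega⟩ : Fin (n+2)) = ⟨0, by omega⟩ := Fin.ext
    (by show sigv n (n+1) = 0; unfold sigv; split_ifs <;> first | exact ‹False›.elim | omega)
  have F1 : z ⟨1, by omega⟩ ⟨n+1, by omega⟩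
      = -((starRingEnd ℂ) (z ⟨0, by omega⟩ ⟨n, by omega⟩)) := by
    have h := sigrel n hn z hJ ⟨n, by omega⟩ ⟨n+1, by omega⟩
    rw [sN, sN1] at h
    linear_combination h
  have F2 : (z ⟨0, by omega⟩ ⟨n+1, by omega⟩).re = 0 := by
    have h := sigrel n hn z hJ ⟨n+1, by omega⟩ ⟨n+1, by omega⟩
    rw [sN1] at h
    have h2 := congrArg Complex.re h
    simp only [Complex.add_re, Complex.conj_re, Complex.zero_re] at h2
    linarith
  have F3 : (z ⟨1, by omega⟩ ⟨n, by omega⟩).re = 0 := by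
    have h := sigrel n hn z hJ ⟨n, by omega⟩ ⟨n, by omega⟩
    rw [sN] at h
    have h2 := congrArg Complex.re h
    simp only [Complex.add_re, Complex.conj_re, Complex.zero_re] at h2
    linarith
  have hsq : z * z = 0 := by
    ext i j
    rw [Matrix.mul_apply, Matrix.zero_apply]
    apply Finset.sum_eq_zero
    intro k _
    rcases lt_or_ge (k:ℕ) 2 with hk | hk
    · rw [hpat i k (Or.inr (by omega)), zero_mul]
    · rw [hpat k j (Or.inl hk), mul_zero]
  -- entry formulas for 1 + m • z
  have hdiag : ∀ (m : ℕ) (i : Fin (n+2)), (1 + (m:ℝ) • z) i i = 1 := by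
    intro m i
    rw [Matrix.add_apply, Matrix.smul_apply, Matrix.one_apply_eq, htri i i le_rfl,
      smul_zero, add_zero]
  have hoff : ∀ (m : ℕ) (i j : Fin (n+2)), i ≠ j →
      (1 + (m:ℝ) • z) i j = ((m:ℝ) : ℂ) * z i j := by
    intro m i j hij
    rw [Matrix.add_apply, Matrix.smul_apply, Matrix.one_apply_ne hij, zero_add,
      Complex.real_smul]
  have habs : ∀ (m : ℕ) (i j : Fin (n+2)), i ≠ j →
      ‖(1 + (m:ℝ) • z) i j‖ = (m:ℝ) * ‖z i j‖ := by
    intro m i j hij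
    rw [hoff m i j hij, norm_mul, Complex.norm_of_nonneg (Nat.cast_nonneg m)]
  -- constants
  have hD : 0 < |sxR n z * syR n z - Complex.normSq (etaC n z)| :=
    abs_pos.mpr (sub_ne_zero.mpr fun hc => hne hc.symm)
  have hzne : z ≠ 0 := by
    intro h0
    apply hne
    rw [h0]
    simp [etaC, sxR, syR]
  have hMz : 0 < entryNorm n z := by
    have hex : ∃ p : Fin (n+2) × Fin (n+2), z p.1 p.2 ≠ 0 := by
      by_contra hc
      push_neg at hc
      exact hzne (by ext a b; simpa using hc (a, b))
    obtain ⟨p, hp⟩ := hex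
    exact lt_of_lt_of_le (norm_pos_iff.mpr hp) (entry_le n z p.1 p.2)
  -- entry norm bounds
  have Elb1 : ∀ m : ℕ, 1 ≤ entryNorm n (1 + (m:ℝ) • z) := by
    intro m
    have h1 := entry_le n (1 + (m:ℝ) • z) ⟨0, by omega⟩ ⟨0, by omega⟩
    rwa [hdiag m, norm_one] at h1
  have Eub : ∀ m : ℕ, entryNorm n (1 + (m:ℝ) • z) ≤ max 1 ((m:ℝ) * entryNorm n z) := by
    intro m
    apply Finset.sup'_le
    intro p _
    by_cases hp : p.1 = p.2
    · rw [show (1 + (m:ℝ) • z) p.1 p.2 = 1 by rw [hp]; exact hdiag m p.2, norm_one]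
      exact le_max_left _ _
    · rw [habs m p.1 p.2 hp]
      exact le_trans (mul_le_mul_of_nonneg_left (entry_le n z p.1 p.2) (Nat.cast_nonneg m))
        (le_max_right _ _)
  have Elb2 : ∀ m : ℕ, (m:ℝ) * entryNorm n z ≤ entryNorm n (1 + (m:ℝ) • z) := by
    intro m
    obtain ⟨p, -, hpe⟩ := Finset.exists_mem_eq_sup' (Finset.univ_nonempty)
      (fun p : Fin (n+2) × Fin (n+2) => ‖z p.1 p.2‖)
    have hMzp : entryNorm n z = ‖z p.1 p.2‖ := hpe
    have hne' : p.1 ≠ p.2 := by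
      intro hq
      have hz0 : z p.1 p.2 = 0 := htri p.1 p.2 (le_of_eq (by rw [hq]))
      rw [hMzp, hz0, norm_zero] at hMz
      exact lt_irrefl _ hMz
    calc (m:ℝ) * entryNorm n z = ‖(1 + (m:ℝ) • z) p.1 p.2‖ := by
          rw [hMzp, ← habs m p.1 p.2 hne']
      _ ≤ _ := entry_le n _ p.1 p.2
  -- rho lower bounds
  have Rlb1 : ∀ m : ℕ, 1 ≤ rhoNorm n (1 + (m:ℝ) • z) := by
    intro m
    have h1 := minor_le n (1 + (m:ℝ) • z) ⟨0, by omega⟩ ⟨1, by omega⟩ ⟨0, by omega⟩ ⟨1, by omega⟩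
    have e01 : (1 + (m:ℝ) • z) ⟨0, by omega⟩ ⟨1, by omega⟩ = 0 := by
      rw [hoff m ⟨0, by omega⟩ ⟨1, by omega⟩ (Fin.ne_of_val_ne (show (0:ℕ) ≠ 1 by omega)),
        hpat ⟨0, by omega⟩ ⟨1, by omega⟩ (Or.inr (show (1:ℕ) < n by omega)), mul_zero]
    have e10 : (1 + (m:ℝ) • z) ⟨1, by omega⟩ ⟨0, by omega⟩ = 0 := by
      rw [hoff m ⟨1, by omega⟩ ⟨0, by omega⟩ (Fin.ne_of_val_ne (show (1:ℕ) ≠ 0 by omega)),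
        htri ⟨1, by omega⟩ ⟨0, by omega⟩ (show (0:ℕ) ≤ 1 by omega), mul_zero]
    rw [hdiag, hdiag, e01, e10] at h1
    simpa using h1
  have Rlb2 : ∀ m : ℕ, (m:ℝ)^2 * |sxR n z * syR n z - Complex.normSq (etaC n z)|
      ≤ rhoNorm n (1 + (m:ℝ) • z) := by
    intro m
    have h1 := minor_le n (1 + (m:ℝ) • z) ⟨0, by omega⟩ ⟨1, by omega⟩ ⟨n, by omega⟩
      ⟨n+1, by omega⟩
    have ha : z ⟨0, by omega⟩ ⟨n+1, by omega⟩ = ((sxR n z : ℝ) : ℂ) * Complex.I := by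
      have h2 : sxR n z = (z ⟨0, by omega⟩ ⟨n+1, by omega⟩).im := rfl
      rw [← Complex.re_add_im (z ⟨0, by omega⟩ ⟨n+1, by omega⟩), F2, h2]
      simp
    have hb : z ⟨1, by omega⟩ ⟨n, by omega⟩ = ((syR n z : ℝ) : ℂ) * Complex.I := by
      have h2 : syR n z = (z ⟨1, by omega⟩ ⟨n, by omega⟩).im := rfl
      rw [← Complex.re_add_im (z ⟨1, by omega⟩ ⟨n, by omega⟩), F3, h2]
      simp
    have e0n : (1 + (m:ℝ) • z) ⟨0, by omega⟩ ⟨n, by omega⟩ = ((m:ℝ):ℂ) * etaC n z := by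
      rw [hoff m ⟨0, by omega⟩ ⟨n, by omega⟩ (Fin.ne_of_val_ne (show (0:ℕ) ≠ n by omega))]
      rfl
    have e1n1 : (1 + (m:ℝ) • z) ⟨1, by omega⟩ ⟨n+1, by omega⟩
        = ((m:ℝ):ℂ) * -((starRingEnd ℂ) (etaC n z)) := by
      rw [hoff m ⟨1, by omega⟩ ⟨n+1, by omega⟩ (Fin.ne_of_val_ne (show (1:ℕ) ≠ n+1 by omega)),
        F1]
      rfl
    have e0n1 : (1 + (m:ℝ) • z) ⟨0, by omega⟩ ⟨n+1, by omega⟩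
        = ((m:ℝ):ℂ) * (((sxR n z : ℝ) : ℂ) * Complex.I) := by
      rw [hoff m ⟨0, by omega⟩ ⟨n+1, by omega⟩ (Fin.ne_of_val_ne (show (0:ℕ) ≠ n+1 by omega)),
        ha]
    have e1n : (1 + (m:ℝ) • z) ⟨1, by omega⟩ ⟨n, by omega⟩
        = ((m:ℝ):ℂ) * (((syR n z : ℝ) : ℂ) * Complex.I) := by
      rw [hoff m ⟨1, by omega⟩ ⟨n, by omega⟩ (Fin.ne_of_val_ne (show (1:ℕ) ≠ n by omega)), hb]
    rw [e0n, e1n1, e0n1, e1n] at h1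
    refine le_trans (le_of_eq ?_) h1
    have key : ((((m:ℝ)^2 * (sxR n z * syR n z - Complex.normSq (etaC n z))) : ℝ) : ℂ)
        = ((m:ℝ):ℂ) * etaC n z * (((m:ℝ):ℂ) * -((starRingEnd ℂ) (etaC n z)))
          - ((m:ℝ):ℂ) * (((sxR n z : ℝ) : ℂ) * Complex.I)
            * (((m:ℝ):ℂ) * (((syR n z : ℝ) : ℂ) * Complex.I)) := by
      push_cast
      rw [← Complex.mul_conj]
      ring_nf
      rw [Complex.I_sq]
      ring
    calc (m:ℝ)^2 * |sxR n z * syR n z - Complex.normSq (etaC n z)|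
        = ‖((((m:ℝ)^2 * (sxR n z * syR n z - Complex.normSq (etaC n z))) : ℝ) : ℂ)‖ := by
          rw [Complex.norm_real, Real.norm_eq_abs, abs_mul, abs_of_nonneg (sq_nonneg (m:ℝ))]
      _ = _ := by rw [key]
  -- conclusion
  refine ⟨fun m => 1 + (m:ℝ) • z,
    min 1 (|sxR n z * syR n z - Complex.normSq (etaC n z)| / (entryNorm n z)^2), 2,
    lt_min one_pos (div_pos hD (pow_pos hMz 2)), two_pos, ?_, ?_, ?_⟩
  · intro m
    refine ⟨(m:ℝ) • z, Submodule.smul_mem 𝔥 _ hzH, ?_⟩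
    show NormedSpace.exp ((m:ℝ) • z) = 1 + (m:ℝ) • z
    exact exp_sq_zero _ (by rw [smul_mul_assoc, mul_smul_comm, hsq, smul_zero, smul_zero])
  · refine Filter.tendsto_atTop_mono Elb2 ?_
    exact Filter.Tendsto.atTop_mul_const hMz tendsto_natCast_atTop_atTop
  · intro m
    have hE0 : (0:ℝ) ≤ entryNorm n (1 + (m:ℝ) • z) := le_trans zero_le_one (Elb1 m)
    constructor
    · rcases le_or_gt ((m:ℝ) * entryNorm n z) 1 with hcase | hcase
      · calc min 1 (|sxR n z * syR n z - Complex.normSq (etaC n z)| / (entryNorm n z)^2)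
              * (entryNorm n (1 + (m:ℝ) • z))^2
            ≤ 1 * 1^2 := by
              refine mul_le_mul (min_le_left _ _) ?_ (pow_nonneg hE0 2) zero_le_one
              exact pow_le_pow_left₀ hE0 (le_trans (Eub m) (max_le le_rfl hcase)) 2
          _ = 1 := by norm_num
          _ ≤ rhoNorm n (1 + (m:ℝ) • z) := Rlb1 m
      · have hE : entryNorm n (1 + (m:ℝ) • z) ≤ (m:ℝ) * entryNorm n z :=
          le_trans (Eub m) (max_le (le_of_lt hcase) le_rfl)
        calc min 1 (|sxR n z * syR n z - Complex.normSq (etaC n z)| / (entryNorm n z)^2)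
              * (entryNorm n (1 + (m:ℝ) • z))^2
            ≤ (|sxR n z * syR n z - Complex.normSq (etaC n z)| / (entryNorm n z)^2)
              * ((m:ℝ) * entryNorm n z)^2 :=
              mul_le_mul (min_le_right _ _) (pow_le_pow_left₀ hE0 hE 2) (pow_nonneg hE0 2)
                (le_of_lt (div_pos hD (pow_pos hMz 2)))
          _ = (m:ℝ)^2 * |sxR n z * syR n z - Complex.normSq (etaC n z)| := by
              field_simp
          _ ≤ rhoNorm n (1 + (m:ℝ) • z) := Rlb2 m
    · exact le_trans (rho_le_two_sq n _) (le_of_eq rfl)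
end
end

section
/- Suppose there are elements u of 𝔥 and z of 𝔷 such that φ_u = 0 and 𝗑_z·|y_u|² + 𝗒_z·|x_u|² + 2·Im(x_u y_u†·conj(η_z)) ≠ 0. Then there exist a sequence (h_m) of elements of H and constants c, C > 0 such that ‖h_m‖ → ∞ as m → ∞ and c·‖h_m‖² ≤ ‖ρ(h_m)‖ ≤ C·‖h_m‖² for every m. -/
open scoped BigOperators

set_option maxHeartbeats 1600000

noncomputable section

namespace Stmt3Aux

def tau (n : ℕ) (j : Fin (n+2)) : Fin (n+2) :=
  if (j:ℕ) = 0 then ⟨n+1, by omega⟩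
  else if (j:ℕ) = 1 then ⟨n, by omega⟩
  else if (j:ℕ) = n then ⟨1, by omega⟩
  else if (j:ℕ) = n+1 then ⟨0, by omega⟩
  else j

lemma tau0 {n : ℕ} {j : Fin (n+2)} (h : (j:ℕ) = 0) : ((tau n j : Fin (n+2)) : ℕ) = n+1 := by
  unfold tau; rw [if_pos h]

lemma tau1 {n : ℕ} {j : Fin (n+2)} (h : (j:ℕ) = 1) : ((tau n j : Fin (n+2)) : ℕ) = n := by
  unfold tau; rw [if_neg (by omega), if_pos h]

lemma tauN {n : ℕ} (hn : 2 ≤ n) {j : Fin (n+2)} (h : (j:ℕ) = n) :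
    ((tau n j : Fin (n+2)) : ℕ) = 1 := by
  unfold tau; rw [if_neg (by omega), if_neg (by omega), if_pos h]

lemma tauN1 {n : ℕ} (hn : 2 ≤ n) {j : Fin (n+2)} (h : (j:ℕ) = n+1) : ((tau n j : Fin (n+2)) : ℕ) = 0 := by
  unfold tau; rw [if_neg (by omega), if_neg (by omega), if_neg (by omega), if_pos h]

lemma tauMid {n : ℕ} {j : Fin (n+2)} (h2 : 2 ≤ (j:ℕ)) (hm : (j:ℕ)+1 ≤ n) :
    ((tau n j : Fin (n+2)) : ℕ) = (j:ℕ) := by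
  unfold tau; rw [if_neg (by omega), if_neg (by omega), if_neg (by omega), if_neg (by omega)]

lemma tau_cases {n : ℕ} (hn : 2 ≤ n) (j : Fin (n+2)) :
    ((j:ℕ) = 0 ∧ (tau n j : ℕ) = n+1) ∨ ((j:ℕ) = 1 ∧ (tau n j : ℕ) = n)
    ∨ ((j:ℕ) = n ∧ (tau n j : ℕ) = 1) ∨ ((j:ℕ) = n+1 ∧ (tau n j : ℕ) = 0)
    ∨ (2 ≤ (j:ℕ) ∧ (j:ℕ)+1 ≤ n ∧ (tau n j : ℕ) = (j:ℕ)) := by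
  have hj2 := j.isLt
  by_cases h0 : (j:ℕ) = 0
  · exact Or.inl ⟨h0, tau0 h0⟩
  by_cases h1 : (j:ℕ) = 1
  · exact Or.inr (Or.inl ⟨h1, tau1 h1⟩)
  by_cases hN : (j:ℕ) = n
  · exact Or.inr (Or.inr (Or.inl ⟨hN, tauN hn hN⟩))
  by_cases hN1 : (j:ℕ) = n+1
  · exact Or.inr (Or.inr (Or.inr (Or.inl ⟨hN1, tauN1 hn hN1⟩)))
  · exact Or.inr (Or.inr (Or.inr (Or.inr ⟨by omega, by omega, tauMid (by omega) (by omega)⟩)))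

lemma Jmat_ne {n : ℕ} (hn : 2 ≤ n) {k j : Fin (n+2)} (h : k ≠ tau n j) : Jmat n k j = 0 := by
  unfold Jmat
  rw [if_neg]
  intro hc
  apply h
  have hv := tau_cases hn j
  have hk2 := k.isLt
  have hj2 := j.isLt
  rcases hc with ⟨h1, h2⟩ | ⟨h1, h2⟩ | ⟨h1, h2⟩ | ⟨h1, h2⟩ | ⟨h1, h2, h3⟩
  · apply Fin.ext; omega
  · apply Fin.ext; omega
  · apply Fin.ext; omega
  · apply Fin.ext; omega
  · have h3' : (k:ℕ) = (j:ℕ) := by rw [h3]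
    apply Fin.ext; omega

lemma Jmat_tau {n : ℕ} (hn : 2 ≤ n) (j : Fin (n+2)) : Jmat n (tau n j) j = 1 := by
  have hv := tau_cases hn j
  have hj2 := j.isLt
  unfold Jmat
  rw [if_pos]
  rcases hv with ⟨h1, h2⟩ | ⟨h1, h2⟩ | ⟨h1, h2⟩ | ⟨h1, h2⟩ | ⟨h1, h2, h3⟩
  · exact Or.inr (Or.inr (Or.inr (Or.inl ⟨h2, h1⟩)))
  · exact Or.inr (Or.inr (Or.inl ⟨h2, h1⟩))
  · exact Or.inr (Or.inl ⟨h2, h1⟩)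
  · exact Or.inl ⟨h2, h1⟩
  · exact Or.inr (Or.inr (Or.inr (Or.inr ⟨by omega, by omega, Fin.ext (by omega)⟩)))

lemma Jmat_ne' {n : ℕ} (hn : 2 ≤ n) {i k : Fin (n+2)} (h : k ≠ tau n i) : Jmat n i k = 0 := by
  unfold Jmat
  rw [if_neg]
  intro hc
  apply h
  have hv := tau_cases hn i
  have hk2 := k.isLt
  have hj2 := i.isLt
  rcases hc with ⟨h1, h2⟩ | ⟨h1, h2⟩ | ⟨h1, h2⟩ | ⟨h1, h2⟩ | ⟨h1, h2, h3⟩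
  · apply Fin.ext; omega
  · apply Fin.ext; omega
  · apply Fin.ext; omega
  · apply Fin.ext; omega
  · have h3' : (i:ℕ) = (k:ℕ) := by rw [h3]
    apply Fin.ext; omega

lemma Jmat_tau' {n : ℕ} (hn : 2 ≤ n) (i : Fin (n+2)) : Jmat n i (tau n i) = 1 := by
  have hv := tau_cases hn i
  have hj2 := i.isLt
  unfold Jmat
  rw [if_pos]
  rcases hv with ⟨h1, h2⟩ | ⟨h1, h2⟩ | ⟨h1, h2⟩ | ⟨h1, h2⟩ | ⟨h1, h2, h3⟩
  · exact Or.inl ⟨h1, h2⟩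
  · exact Or.inr (Or.inl ⟨h1, h2⟩)
  · exact Or.inr (Or.inr (Or.inl ⟨h1, h2⟩))
  · exact Or.inr (Or.inr (Or.inr (Or.inl ⟨h1, h2⟩)))
  · exact Or.inr (Or.inr (Or.inr (Or.inr ⟨by omega, by omega, Fin.ext (by omega)⟩)))

lemma rel {n : ℕ} (hn : 2 ≤ n) {v : Matrix (Fin (n+2)) (Fin (n+2)) ℂ} (hv : inLieN n v)
    (i j : Fin (n+2)) :
    (starRingEnd ℂ) (v (tau n j) i) + v (tau n i) j = 0 := by
  have h := congrFun (congrFun hv.2 i) j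
  simp only [Matrix.add_apply, Matrix.mul_apply, Matrix.conjTranspose_apply,
    Matrix.zero_apply] at h
  rw [Finset.sum_eq_single (tau n j) (fun b _ hb => by rw [Jmat_ne hn hb, mul_zero])
      (fun hb => absurd (Finset.mem_univ _) hb),
    Finset.sum_eq_single (tau n i) (fun b _ hb => by rw [Jmat_ne' hn hb, zero_mul])
      (fun hb => absurd (Finset.mem_univ _) hb),
    Jmat_tau hn, Jmat_tau' hn, mul_one, one_mul] at h
  exact h


section EntryLemmas

variable {n : ℕ} {v : Matrix (Fin (n+2)) (Fin (n+2)) ℂ}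

lemma tau_eq_at_n (hn : 2 ≤ n) : tau n (⟨n, by omega⟩ : Fin (n+2)) = ⟨1, by omega⟩ :=
  Fin.ext (by rw [tauN hn rfl])

lemma tau_eq_at_np1 (hn : 2 ≤ n) : tau n (⟨n+1, by omega⟩ : Fin (n+2)) = ⟨0, by omega⟩ :=
  Fin.ext (by rw [tauN1 hn rfl])

lemma tau_eq_at_1 : tau n (⟨1, by omega⟩ : Fin (n+2)) = ⟨n, by omega⟩ :=
  Fin.ext (by rw [tau1 rfl])

lemma tau_eq_mid (hn : 2 ≤ n) {a : Fin (n+2)} (h2 : 2 ≤ (a:ℕ)) (hm : (a:ℕ)+1 ≤ n) :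
    tau n a = a :=
  Fin.ext (tauMid h2 hm)

lemma e_mid_n (hn : 2 ≤ n) (hv : inLieN n v) {a : Fin (n+2)} (h2 : 2 ≤ (a:ℕ))
    (hm : (a:ℕ)+1 ≤ n) :
    v a ⟨n, by omega⟩ = -((starRingEnd ℂ) (v ⟨1, by omega⟩ a)) := by
  have h := rel hn hv a ⟨n, by omega⟩
  rw [tau_eq_at_n hn, tau_eq_mid hn h2 hm] at h
  exact eq_neg_of_add_eq_zero_right h

lemma e_mid_np1 (hn : 2 ≤ n) (hv : inLieN n v) {a : Fin (n+2)} (h2 : 2 ≤ (a:ℕ))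
    (hm : (a:ℕ)+1 ≤ n) :
    v a ⟨n+1, by omega⟩ = -((starRingEnd ℂ) (v ⟨0, by omega⟩ a)) := by
  have h := rel hn hv a ⟨n+1, by omega⟩
  rw [tau_eq_at_np1 hn, tau_eq_mid hn h2 hm] at h
  exact eq_neg_of_add_eq_zero_right h

lemma e_1_np1 (hn : 2 ≤ n) (hv : inLieN n v) :
    v ⟨1, by omega⟩ ⟨n+1, by omega⟩ = -((starRingEnd ℂ) (v ⟨0, by omega⟩ ⟨n, by omega⟩)) := by
  have h := rel hn hv ⟨n, by omega⟩ ⟨n+1, by omega⟩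
  rw [tau_eq_at_np1 hn, tau_eq_at_n hn] at h
  exact eq_neg_of_add_eq_zero_right h

lemma e_n_np1 (hn : 2 ≤ n) (hv : inLieN n v) (hphi : v ⟨0, by omega⟩ ⟨1, by omega⟩ = 0) :
    v ⟨n, by omega⟩ ⟨n+1, by omega⟩ = 0 := by
  have h := rel hn hv ⟨1, by omega⟩ ⟨n+1, by omega⟩
  rw [tau_eq_at_np1 hn, tau_eq_at_1, hphi, map_zero, zero_add] at h
  exact h

lemma e_0_np1_skew (hn : 2 ≤ n) (hv : inLieN n v) :
    (starRingEnd ℂ) (v ⟨0, by omega⟩ ⟨n+1, by omega⟩) + v ⟨0, by omega⟩ ⟨n+1, by omega⟩ = 0 := by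
  have h := rel hn hv ⟨n+1, by omega⟩ ⟨n+1, by omega⟩
  rwa [tau_eq_at_np1 hn] at h

lemma e_1_n_skew (hn : 2 ≤ n) (hv : inLieN n v) :
    (starRingEnd ℂ) (v ⟨1, by omega⟩ ⟨n, by omega⟩) + v ⟨1, by omega⟩ ⟨n, by omega⟩ = 0 := by
  have h := rel hn hv ⟨n, by omega⟩ ⟨n, by omega⟩
  rwa [tau_eq_at_n hn] at h

lemma e_midmid (hn : 2 ≤ n) (hv : inLieN n v) {i j : Fin (n+2)} (hi2 : 2 ≤ (i:ℕ))
    (him : (i:ℕ)+1 ≤ n) (hj2 : 2 ≤ (j:ℕ)) (hjm : (j:ℕ)+1 ≤ n) : v i j = 0 := by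
  by_cases hle : (j:ℕ) ≤ (i:ℕ)
  · exact hv.1 i j hle
  · have h := rel hn hv i j
    rw [tau_eq_mid hn hj2 hjm, tau_eq_mid hn hi2 him, hv.1 j i (by omega), map_zero,
      zero_add] at h
    exact h

/-- Structure lemma: entries of `v ∈ 𝔫` with `φ_v = 0` vanish outside the allowed region. -/
lemma S1 (hn : 2 ≤ n) (hv : inLieN n v) (hphi : v ⟨0, by omega⟩ ⟨1, by omega⟩ = 0)
    (i j : Fin (n+2))
    (h : ¬(((i:ℕ) ≤ 1 ∧ 2 ≤ (j:ℕ)) ∨ (2 ≤ (i:ℕ) ∧ (i:ℕ)+1 ≤ n ∧ n ≤ (j:ℕ)))) :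
    v i j = 0 := by
  have hi2 := i.isLt
  have hj2 := j.isLt
  by_cases hle : (j:ℕ) ≤ (i:ℕ)
  · exact hv.1 i j hle
  push_neg at h hle
  by_cases hi1 : (i:ℕ) ≤ 1
  · have hj1 : (j:ℕ) < 2 := h.1 hi1
    have hi0 : i = (⟨0, by omega⟩ : Fin (n+2)) := Fin.ext (show (i:ℕ) = 0 by omega)
    have hj0 : j = (⟨1, by omega⟩ : Fin (n+2)) := Fin.ext (show (j:ℕ) = 1 by omega)
    rw [hi0, hj0]; exact hphi
  · push_neg at hi1
    by_cases him : (i:ℕ)+1 ≤ n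
    · have hjn : (j:ℕ) < n := h.2 (by omega) him
      exact e_midmid hn hv (by omega) him (by omega) (by omega)
    · have hi0 : i = (⟨n, by omega⟩ : Fin (n+2)) := Fin.ext (show (i:ℕ) = n by omega)
      have hj0 : j = (⟨n+1, by omega⟩ : Fin (n+2)) := Fin.ext (show (j:ℕ) = n+1 by omega)
      rw [hi0, hj0]; exact e_n_np1 hn hv hphi

end EntryLemmas


section Layer3

variable {n : ℕ} {u z : Matrix (Fin (n+2)) (Fin (n+2)) ℂ}

lemma xV_entry (hx : xV n z = 0) {a : Fin (n+2)} (h2 : 2 ≤ (a:ℕ)) (hm : (a:ℕ)+1 ≤ n) :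
    z ⟨0, by omega⟩ a = 0 := by
  have h := congrFun hx a
  unfold xV at h
  rwa [if_pos ⟨h2, hm⟩] at h

lemma yV_entry (hy : yV n z = 0) {a : Fin (n+2)} (h2 : 2 ≤ (a:ℕ)) (hm : (a:ℕ)+1 ≤ n) :
    z ⟨1, by omega⟩ a = 0 := by
  have h := congrFun hy a
  unfold yV at h
  rwa [if_pos ⟨h2, hm⟩] at h

/-- Structure lemma for elements of `𝔷`. -/
lemma S1z (hn : 2 ≤ n) (hv : inLieN n z) (hphi : z ⟨0, by omega⟩ ⟨1, by omega⟩ = 0)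
    (hx : xV n z = 0) (hy : yV n z = 0) (i j : Fin (n+2))
    (h : ¬((i:ℕ) ≤ 1 ∧ n ≤ (j:ℕ))) : z i j = 0 := by
  have hi2 := i.isLt
  have hj2 := j.isLt
  by_cases h1 : (i:ℕ) ≤ 1
  · push_neg at h
    have hjn : (j:ℕ) < n := h h1
    by_cases hj2' : 2 ≤ (j:ℕ)
    · have hi0 : i = (⟨0, by omega⟩ : Fin (n+2)) ∨ i = (⟨1, by omega⟩ : Fin (n+2)) := by
        rcases Nat.lt_or_ge (i:ℕ) 1 with hc | hc
        · exact Or.inl (Fin.ext (show (i:ℕ) = 0 by omega))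
        · exact Or.inr (Fin.ext (show (i:ℕ) = 1 by omega))
      rcases hi0 with h' | h'
      · rw [h']; exact xV_entry hx hj2' (by omega)
      · rw [h']; exact yV_entry hy hj2' (by omega)
    · exact S1 hn hv hphi i j (by omega)
  · push_neg at h1
    by_cases him : (i:ℕ)+1 ≤ n
    · by_cases hjn : n ≤ (j:ℕ)
      · have hj0 : j = (⟨n, by omega⟩ : Fin (n+2)) ∨ j = (⟨n+1, by omega⟩ : Fin (n+2)) := by
          rcases Nat.lt_or_ge (j:ℕ) (n+1) with hc | hc
          · exact Or.inl (Fin.ext (show (j:ℕ) = n by omega))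
          · exact Or.inr (Fin.ext (show (j:ℕ) = n+1 by omega))
        rcases hj0 with h' | h'
        · rw [h', e_mid_n hn hv (by omega) him, yV_entry hy (by omega) him, map_zero, neg_zero]
        · rw [h', e_mid_np1 hn hv (by omega) him, xV_entry hx (by omega) him, map_zero, neg_zero]
      · exact S1 hn hv hphi i j (by omega)
    · exact S1 hn hv hphi i j (by omega)

lemma prod_uz (hn : 2 ≤ n) (hu : inLieN n u) (hz : inLieN n z)
    (hpu : u ⟨0, by omega⟩ ⟨1, by omega⟩ = 0) (hpz : z ⟨0, by omega⟩ ⟨1, by omega⟩ = 0)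
    (hx : xV n z = 0) (hy : yV n z = 0) : u * z = 0 := by
  ext i j
  rw [Matrix.mul_apply, Matrix.zero_apply]
  apply Finset.sum_eq_zero
  intro k _
  by_cases hk : (k:ℕ) ≤ 1
  · rw [S1 hn hu hpu i k (by omega), zero_mul]
  · rw [S1z hn hz hpz hx hy k j (by omega), mul_zero]

lemma prod_zu (hn : 2 ≤ n) (hu : inLieN n u) (hz : inLieN n z)
    (hpu : u ⟨0, by omega⟩ ⟨1, by omega⟩ = 0) (hpz : z ⟨0, by omega⟩ ⟨1, by omega⟩ = 0)
    (hx : xV n z = 0) (hy : yV n z = 0) : z * u = 0 := by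
  ext i j
  rw [Matrix.mul_apply, Matrix.zero_apply]
  apply Finset.sum_eq_zero
  intro k _
  by_cases hk : n ≤ (k:ℕ)
  · rw [S1 hn hu hpu k j (by omega), mul_zero]
  · rw [S1z hn hz hpz hx hy i k (by omega), zero_mul]

lemma prod_zz (hn : 2 ≤ n) (hz : inLieN n z)
    (hpz : z ⟨0, by omega⟩ ⟨1, by omega⟩ = 0)
    (hx : xV n z = 0) (hy : yV n z = 0) : z * z = 0 := by
  ext i j
  rw [Matrix.mul_apply, Matrix.zero_apply]
  apply Finset.sum_eq_zero
  intro k _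
  by_cases hk : (k:ℕ) ≤ 1
  · rw [S1z hn hz hpz hx hy i k (by omega), zero_mul]
  · rw [S1z hn hz hpz hx hy k j (by omega), mul_zero]

lemma u2_row (hn : 2 ≤ n) (hu : inLieN n u) (hpu : u ⟨0, by omega⟩ ⟨1, by omega⟩ = 0)
    {a : Fin (n+2)} (ha : 2 ≤ (a:ℕ)) (j : Fin (n+2)) : (u * u) a j = 0 := by
  rw [Matrix.mul_apply]
  apply Finset.sum_eq_zero
  intro k _
  by_cases hk : n ≤ (k:ℕ)
  · rw [S1 hn hu hpu k j (by omega), mul_zero]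
  · rw [S1 hn hu hpu a k (by omega), zero_mul]

lemma prod_u3 (hn : 2 ≤ n) (hu : inLieN n u) (hpu : u ⟨0, by omega⟩ ⟨1, by omega⟩ = 0) :
    u * (u * u) = 0 := by
  ext i j
  rw [Matrix.mul_apply, Matrix.zero_apply]
  apply Finset.sum_eq_zero
  intro k _
  by_cases hk : (k:ℕ) ≤ 1
  · rw [S1 hn hu hpu i k (by omega), zero_mul]
  · rw [u2_row hn hu hpu (by omega) j, mul_zero]

lemma u2_0n (hn : 2 ≤ n) (hu : inLieN n u) (hpu : u ⟨0, by omega⟩ ⟨1, by omega⟩ = 0) :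
    (u * u) ⟨0, by omega⟩ ⟨n, by omega⟩ = -(dotC n (xV n u) (yV n u)) := by
  rw [Matrix.mul_apply]
  unfold dotC
  rw [← Finset.sum_neg_distrib]
  apply Finset.sum_congr rfl
  intro k _
  by_cases hk : 2 ≤ (k:ℕ) ∧ (k:ℕ)+1 ≤ n
  · unfold xV yV
    rw [if_pos hk, if_pos hk, e_mid_n hn hu hk.1 hk.2]
    ring
  · have h0 : xV n u k = 0 := by unfold xV; rw [if_neg hk]
    rw [h0, zero_mul, neg_zero]
    by_cases hk1 : (k:ℕ) ≤ 1
    · rw [S1 hn hu hpu _ k (by omega), zero_mul]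
    · rw [S1 hn hu hpu k _ (by omega), mul_zero]

lemma u2_0np1 (hn : 2 ≤ n) (hu : inLieN n u) (hpu : u ⟨0, by omega⟩ ⟨1, by omega⟩ = 0) :
    (u * u) ⟨0, by omega⟩ ⟨n+1, by omega⟩ = -((nsqR n (xV n u) : ℝ) : ℂ) := by
  rw [Matrix.mul_apply]
  unfold nsqR
  push_cast
  rw [← Finset.sum_neg_distrib]
  apply Finset.sum_congr rfl
  intro k _
  by_cases hk : 2 ≤ (k:ℕ) ∧ (k:ℕ)+1 ≤ n
  · have hx : xV n u k = u ⟨0, by omega⟩ k := by unfold xV; rw [if_pos hk]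
    rw [← hx, ← Complex.mul_conj, e_mid_np1 hn hu hk.1 hk.2, ← hx]
    ring
  · have h0 : xV n u k = 0 := by unfold xV; rw [if_neg hk]
    rw [h0]
    simp only [map_zero, Complex.normSq_zero, Complex.ofReal_zero, neg_zero]
    by_cases hk1 : (k:ℕ) ≤ 1
    · rw [S1 hn hu hpu _ k (by omega), zero_mul]
    · rw [S1 hn hu hpu k _ (by omega), mul_zero]

lemma u2_1n (hn : 2 ≤ n) (hu : inLieN n u) (hpu : u ⟨0, by omega⟩ ⟨1, by omega⟩ = 0) :
    (u * u) ⟨1, by omega⟩ ⟨n, by omega⟩ = -((nsqR n (yV n u) : ℝ) : ℂ) := by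
  rw [Matrix.mul_apply]
  unfold nsqR
  push_cast
  rw [← Finset.sum_neg_distrib]
  apply Finset.sum_congr rfl
  intro k _
  by_cases hk : 2 ≤ (k:ℕ) ∧ (k:ℕ)+1 ≤ n
  · have hy : yV n u k = u ⟨1, by omega⟩ k := by unfold yV; rw [if_pos hk]
    rw [← Complex.mul_conj, ← hy, e_mid_n hn hu hk.1 hk.2, ← hy]
    ring
  · have h0 : yV n u k = 0 := by unfold yV; rw [if_neg hk]
    rw [h0]
    simp only [map_zero, Complex.normSq_zero, Complex.ofReal_zero, neg_zero]
    by_cases hk1 : (k:ℕ) ≤ 1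
    · rw [S1 hn hu hpu _ k (by omega), zero_mul]
    · rw [S1 hn hu hpu k _ (by omega), mul_zero]

lemma u2_1np1 (hn : 2 ≤ n) (hu : inLieN n u) (hpu : u ⟨0, by omega⟩ ⟨1, by omega⟩ = 0) :
    (u * u) ⟨1, by omega⟩ ⟨n+1, by omega⟩ = -(dotC n (yV n u) (xV n u)) := by
  rw [Matrix.mul_apply]
  unfold dotC
  rw [← Finset.sum_neg_distrib]
  apply Finset.sum_congr rfl
  intro k _
  by_cases hk : 2 ≤ (k:ℕ) ∧ (k:ℕ)+1 ≤ n
  · unfold xV yV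
    rw [if_pos hk, if_pos hk, e_mid_np1 hn hu hk.1 hk.2]
    ring
  · have h0 : yV n u k = 0 := by unfold yV; rw [if_neg hk]
    rw [h0, zero_mul, neg_zero]
    by_cases hk1 : (k:ℕ) ≤ 1
    · rw [S1 hn hu hpu _ k (by omega), zero_mul]
    · rw [S1 hn hu hpu k _ (by omega), mul_zero]

lemma dotC_conj (x y : Fin (n+2) → ℂ) : dotC n y x = (starRingEnd ℂ) (dotC n x y) := by
  unfold dotC
  rw [map_sum]
  apply Finset.sum_congr rfl
  intro k _
  simp [mul_comm]

lemma exp_of_cube_zero (A : Matrix (Fin (n+2)) (Fin (n+2)) ℂ) (hA : A * A * A = 0) :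
    NormedSpace.exp A = 1 + A + (2⁻¹ : ℂ) • (A * A) := by
  rw [show NormedSpace.exp A = ∑' (k : ℕ), ((k.factorial : ℂ))⁻¹ • A ^ k from
    congrFun (NormedSpace.exp_eq_tsum ℂ) A]
  have h3 : A ^ 3 = 0 := by
    rw [pow_succ, pow_two, hA]
  have hk : ∀ k ∉ Finset.range 3, ((k.factorial : ℂ))⁻¹ • A ^ k = 0 := by
    intro k hkk
    have h3le : 3 ≤ k := by simpa using hkk
    have : A ^ k = A ^ 3 * A ^ (k - 3) := by
      rw [← pow_add]
      congr 1
      omega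
    rw [this, h3, zero_mul, smul_zero]
  rw [tsum_eq_sum hk]
  rw [Finset.sum_range_succ, Finset.sum_range_succ, Finset.sum_range_one]
  norm_num [Nat.factorial, pow_two]

lemma eq_I_mul_im {x : ℂ} (h : (starRingEnd ℂ) x + x = 0) : x = Complex.I * (x.im : ℝ) := by
  have hre : x.re = 0 := by
    have := congrArg Complex.re h
    simp only [Complex.add_re, Complex.conj_re, Complex.zero_re] at this
    linarith
  apply Complex.ext <;> simp [hre]

lemma le_entryNorm (h : Matrix (Fin (n+2)) (Fin (n+2)) ℂ) (i j : Fin (n+2)) :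
    ‖h i j‖ ≤ entryNorm n h :=
  Finset.le_sup' (fun p : Fin (n+2) × Fin (n+2) => ‖h p.1 p.2‖)
    (Finset.mem_univ (i, j))

lemma entryNorm_nonneg (h : Matrix (Fin (n+2)) (Fin (n+2)) ℂ) : 0 ≤ entryNorm n h :=
  le_trans (norm_nonneg _) (le_entryNorm h ⟨0, by omega⟩ ⟨0, by omega⟩)

lemma entryNorm_le (h : Matrix (Fin (n+2)) (Fin (n+2)) ℂ) (B : ℝ)
    (hB : ∀ i j, ‖h i j‖ ≤ B) : entryNorm n h ≤ B :=
  Finset.sup'_le _ _ (fun p _ => hB p.1 p.2)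

lemma rhoNorm_le (h : Matrix (Fin (n+2)) (Fin (n+2)) ℂ) :
    rhoNorm n h ≤ 2 * (entryNorm n h)^2 := by
  apply Finset.sup'_le
  intro q _
  have h1 := le_entryNorm h q.1.1 q.2.1
  have h2 := le_entryNorm h q.1.2 q.2.2
  have h3 := le_entryNorm h q.1.1 q.2.2
  have h4 := le_entryNorm h q.1.2 q.2.1
  have e1 : ‖h q.1.1 q.2.1 * h q.1.2 q.2.2 - h q.1.1 q.2.2 * h q.1.2 q.2.1‖
      ≤ ‖h q.1.1 q.2.1‖ * ‖h q.1.2 q.2.2‖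
        + ‖h q.1.1 q.2.2‖ * ‖h q.1.2 q.2.1‖ := by
    calc ‖h q.1.1 q.2.1 * h q.1.2 q.2.2 - h q.1.1 q.2.2 * h q.1.2 q.2.1‖
        ≤ ‖h q.1.1 q.2.1 * h q.1.2 q.2.2‖
          + ‖h q.1.1 q.2.2 * h q.1.2 q.2.1‖ := by
          exact norm_sub_le _ _
      _ = _ := by rw [norm_mul, norm_mul]
  have hE0 := norm_nonneg (h q.1.1 q.2.1)
  have hE1 := norm_nonneg (h q.1.2 q.2.2)
  have hE2 := norm_nonneg (h q.1.1 q.2.2)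
  have hE3 := norm_nonneg (h q.1.2 q.2.1)
  nlinarith [entryNorm_nonneg h]

lemma delta_le_rhoNorm (hn : 2 ≤ n) (h : Matrix (Fin (n+2)) (Fin (n+2)) ℂ) :
    ‖DeltaC n h‖ ≤ rhoNorm n h := by
  have := Finset.le_sup'
    (fun q : (Fin (n+2) × Fin (n+2)) × Fin (n+2) × Fin (n+2) =>
      ‖h q.1.1 q.2.1 * h q.1.2 q.2.2 - h q.1.1 q.2.2 * h q.1.2 q.2.1‖)
    (Finset.mem_univ (((⟨0, by omega⟩, ⟨1, by omega⟩), (⟨n, by omega⟩, ⟨n+1, by omega⟩)) :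
      (Fin (n+2) × Fin (n+2)) × Fin (n+2) × Fin (n+2)))
  exact this

end Layer3

end Stmt3Aux

theorem stmt3 (n : ℕ) (hn : 2 ≤ n)
    (𝔥 : Submodule ℝ (Matrix (Fin (n+2)) (Fin (n+2)) ℂ))
    (h_sub : ∀ u ∈ 𝔥, inLieN n u)
    (h_bracket : ∀ u ∈ 𝔥, ∀ v ∈ 𝔥, u * v - v * u ∈ 𝔥)
    (u z : Matrix (Fin (n+2)) (Fin (n+2)) ℂ) (hu : u ∈ 𝔥) (hz : inZ n 𝔥 z)
    (hphi : phiC n u = 0)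
    (hne : sxR n z * nsqR n (yV n u) + syR n z * nsqR n (xV n u)
        + 2 * (dotC n (xV n u) (yV n u) * (starRingEnd ℂ) (etaC n z)).im ≠ 0) :
    ∃ (h : ℕ → Matrix (Fin (n+2)) (Fin (n+2)) ℂ) (c C : ℝ),
      0 < c ∧ 0 < C ∧ (∀ m, h m ∈ expSet n 𝔥) ∧
      Filter.Tendsto (fun m => entryNorm n (h m)) Filter.atTop Filter.atTop ∧
      ∀ m, c * (entryNorm n (h m))^2 ≤ rhoNorm n (h m) ∧
        rhoNorm n (h m) ≤ C * (entryNorm n (h m))^2 := by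
  classical
  obtain ⟨hzmem, hzphi, hzx, hzy⟩ := hz
  have huL : inLieN n u := h_sub u hu
  have hzL : inLieN n z := h_sub z hzmem
  have hpu : u ⟨0, by omega⟩ ⟨1, by omega⟩ = 0 := hphi
  have hpz : z ⟨0, by omega⟩ ⟨1, by omega⟩ = 0 := hzphi
  set s : ℝ := nsqR n (xV n u) with hs_def
  set t : ℝ := nsqR n (yV n u) with ht_def
  set p : ℂ := dotC n (xV n u) (yV n u) with hp_def
  set Xz : ℝ := sxR n z with hXz_def
  set Yz : ℝ := syR n z with hYz_def
  set Xu : ℝ := sxR n u with hXu_def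
  set Yu : ℝ := syR n u with hYu_def
  set ez : ℂ := etaC n z with hez_def
  set eu : ℂ := etaC n u with heu_def
  set Q : ℝ := Xz * t + Yz * s + 2 * (p * (starRingEnd ℂ) ez).im with hQ_def
  have hQ : Q ≠ 0 := hne
  have hQpos : 0 < |Q| := abs_pos.mpr hQ
  clear_value s t p Xz Yz Xu Yu ez eu Q
  -- individual matrix entries
  have hu0n : u ⟨0, by omega⟩ ⟨n, by omega⟩ = eu := by rw [heu_def]; rfl
  have hz0n : z ⟨0, by omega⟩ ⟨n, by omega⟩ = ez := by rw [hez_def]; rfl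
  have hu1n1 : u ⟨1, by omega⟩ ⟨n+1, by omega⟩ = -((starRingEnd ℂ) eu) := by
    rw [heu_def]; exact Stmt3Aux.e_1_np1 hn huL
  have hz1n1 : z ⟨1, by omega⟩ ⟨n+1, by omega⟩ = -((starRingEnd ℂ) ez) := by
    rw [hez_def]; exact Stmt3Aux.e_1_np1 hn hzL
  have hu0n1 : u ⟨0, by omega⟩ ⟨n+1, by omega⟩ = Complex.I * (Xu : ℝ) := by
    rw [hXu_def]; exact Stmt3Aux.eq_I_mul_im (Stmt3Aux.e_0_np1_skew hn huL)
  have hz0n1 : z ⟨0, by omega⟩ ⟨n+1, by omega⟩ = Complex.I * (Xz : ℝ) := by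
    rw [hXz_def]; exact Stmt3Aux.eq_I_mul_im (Stmt3Aux.e_0_np1_skew hn hzL)
  have hu1n : u ⟨1, by omega⟩ ⟨n, by omega⟩ = Complex.I * (Yu : ℝ) := by
    rw [hYu_def]; exact Stmt3Aux.eq_I_mul_im (Stmt3Aux.e_1_n_skew hn huL)
  have hz1n : z ⟨1, by omega⟩ ⟨n, by omega⟩ = Complex.I * (Yz : ℝ) := by
    rw [hYz_def]; exact Stmt3Aux.eq_I_mul_im (Stmt3Aux.e_1_n_skew hn hzL)
  have huu0n : (u * u) ⟨0, by omega⟩ ⟨n, by omega⟩ = -p := by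
    rw [hp_def]; exact Stmt3Aux.u2_0n hn huL hpu
  have huu0n1 : (u * u) ⟨0, by omega⟩ ⟨n+1, by omega⟩ = -((s : ℝ) : ℂ) := by
    rw [hs_def]; exact Stmt3Aux.u2_0np1 hn huL hpu
  have huu1n : (u * u) ⟨1, by omega⟩ ⟨n, by omega⟩ = -((t : ℝ) : ℂ) := by
    rw [ht_def]; exact Stmt3Aux.u2_1n hn huL hpu
  have huu1n1 : (u * u) ⟨1, by omega⟩ ⟨n+1, by omega⟩ = -((starRingEnd ℂ) p) := by
    rw [hp_def, Stmt3Aux.u2_1np1 hn huL hpu, Stmt3Aux.dotC_conj]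
  -- polynomial coefficients of Δ
  set Az : ℂ := ez - ((1/2 : ℝ) : ℂ) * p with hAz_def
  set Bz : ℂ := -((starRingEnd ℂ) ez) - ((1/2 : ℝ) : ℂ) * (starRingEnd ℂ) p with hBz_def
  set Cz : ℂ := Complex.I * (Xz : ℝ) - ((1/2 : ℝ) : ℂ) * ((s : ℝ) : ℂ) with hCz_def
  set Dz : ℂ := Complex.I * (Yz : ℝ) - ((1/2 : ℝ) : ℂ) * ((t : ℝ) : ℂ) with hDz_def
  set c2 : ℂ := eu * (-((starRingEnd ℂ) eu)) - (Complex.I * (Xu : ℝ)) * (Complex.I * (Yu : ℝ))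
    with hc2_def
  set c3 : ℂ := eu * Bz + Az * (-((starRingEnd ℂ) eu)) - (Complex.I * (Xu : ℝ)) * Dz
    - Cz * (Complex.I * (Yu : ℝ)) with hc3_def
  set c4 : ℂ := Az * Bz - Cz * Dz with hc4_def
  clear_value Az Bz Cz Dz c2 c3 c4
  have hc4 : c4.im = Q / 2 := by
    rw [hc4_def, hAz_def, hBz_def, hCz_def, hDz_def, hQ_def]
    simp only [Complex.sub_im, Complex.sub_re, Complex.add_im, Complex.add_re, Complex.mul_im,
      Complex.mul_re, Complex.I_re, Complex.I_im, Complex.ofReal_re, Complex.ofReal_im,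
      Complex.neg_re, Complex.neg_im, Complex.conj_re, Complex.conj_im]
    ring
  -- membership and exponential formula
  have hwmem : ∀ M : ℕ, ((M:ℝ) • u + ((M:ℝ))^2 • z) ∈ 𝔥 := fun M =>
    𝔥.add_mem (𝔥.smul_mem _ hu) (𝔥.smul_mem _ hzmem)
  have hcs : ∀ (A : Matrix (Fin (n+2)) (Fin (n+2)) ℂ) (r : ℝ), r • A = ((r : ℝ) : ℂ) • A := by
    intro A r
    ext i j
    simp [Matrix.smul_apply, Complex.real_smul]
  have hUZ := Stmt3Aux.prod_uz hn huL hzL hpu hpz hzx hzy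
  have hZU := Stmt3Aux.prod_zu hn huL hzL hpu hpz hzx hzy
  have hZZ := Stmt3Aux.prod_zz hn hzL hpz hzx hzy
  have hexp : ∀ M : ℕ, NormedSpace.exp ((M:ℝ) • u + ((M:ℝ))^2 • z)
      = 1 + (((M:ℝ)) : ℂ) • u + ((((M:ℝ)) : ℂ))^2 • z
        + (2⁻¹ : ℂ) • (((((M:ℝ)) : ℂ))^2 • (u * u)) := by
    intro M
    set a : ℂ := (((M:ℝ)) : ℂ) with ha_def
    have hA2 : ((a • u + a^2 • z) * (a • u + a^2 • z)) = a^2 • (u*u) := by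
      simp only [add_mul, mul_add, Matrix.smul_mul, Matrix.mul_smul, hUZ, hZU, hZZ, smul_zero,
        add_zero, smul_smul]
      rw [pow_two]
    have hA3 : (a • u + a^2 • z) * (a • u + a^2 • z) * (a • u + a^2 • z) = 0 := by
      rw [hA2]
      have h1 : (u * u) * u = 0 := by rw [mul_assoc]; exact Stmt3Aux.prod_u3 hn huL hpu
      have h2 : (u * u) * z = 0 := by rw [mul_assoc, hUZ, mul_zero]
      simp only [Matrix.smul_mul, mul_add, Matrix.mul_smul, h1, h2, smul_zero, add_zero]
    have hsm : (M:ℝ) • u + ((M:ℝ))^2 • z = a • u + a^2 • z := by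
      rw [hcs u (M:ℝ), hcs z ((M:ℝ)^2), ha_def]
      norm_cast
    rw [hsm, Stmt3Aux.exp_of_cube_zero _ hA3, hA2]
    abel
  have hne0n : (⟨0, by omega⟩ : Fin (n+2)) ≠ ⟨n, by omega⟩ := by
    simp only [ne_eq, Fin.mk.injEq]; omega
  have hne0n1 : (⟨0, by omega⟩ : Fin (n+2)) ≠ ⟨n+1, by omega⟩ := by
    simp only [ne_eq, Fin.mk.injEq]; omega
  have hne1n : (⟨1, by omega⟩ : Fin (n+2)) ≠ ⟨n, by omega⟩ := by
    simp only [ne_eq, Fin.mk.injEq]; omega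
  have hne1n1 : (⟨1, by omega⟩ : Fin (n+2)) ≠ ⟨n+1, by omega⟩ := by
    simp only [ne_eq, Fin.mk.injEq]; omega
  have key : ∀ M : ℕ, DeltaC n (NormedSpace.exp ((M:ℝ) • u + ((M:ℝ))^2 • z))
      = c2 * (((M:ℝ)) : ℂ)^2 + c3 * (((M:ℝ)) : ℂ)^3 + c4 * (((M:ℝ)) : ℂ)^4 := by
    intro M
    rw [hexp M]
    unfold DeltaC
    simp only [Matrix.add_apply, Matrix.smul_apply, smul_eq_mul,
      Matrix.one_apply_ne hne0n, Matrix.one_apply_ne hne0n1,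
      Matrix.one_apply_ne hne1n, Matrix.one_apply_ne hne1n1, zero_add]
    rw [hu0n, hz0n, huu0n, hu1n1, hz1n1, huu1n1, hu0n1, hz0n1, huu0n1, hu1n, hz1n, huu1n,
      hc2_def, hc3_def, hc4_def, hAz_def, hBz_def, hCz_def, hDz_def]
    push_cast
    ring
  have keyIm : ∀ M : ℕ, (DeltaC n (NormedSpace.exp ((M:ℝ) • u + ((M:ℝ))^2 • z))).im
      = c2.im * (M:ℝ)^2 + c3.im * (M:ℝ)^3 + c4.im * (M:ℝ)^4 := by
    intro M
    rw [key M]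
    have him : ∀ (c : ℂ) (k : ℕ), (c * (((M:ℝ)) : ℂ)^k).im = c.im * (M:ℝ)^k := by
      intro c k
      have hck : ((((M:ℝ)) : ℂ))^k = (((M:ℝ)^k : ℝ) : ℂ) := by push_cast; ring
      rw [hck, Complex.mul_im, Complex.ofReal_im, Complex.ofReal_re, mul_zero, zero_add]
    simp only [Complex.add_im, him]
  -- entry-norm upper bound
  set eU : ℝ := entryNorm n u with heU_def
  set eZ : ℝ := entryNorm n z with heZ_def
  set eU2 : ℝ := entryNorm n (u * u) with heU2_def
  have heU0 : 0 ≤ eU := Stmt3Aux.entryNorm_nonneg u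
  have heZ0 : 0 ≤ eZ := Stmt3Aux.entryNorm_nonneg z
  have heU20 : 0 ≤ eU2 := Stmt3Aux.entryNorm_nonneg (u * u)
  set K : ℝ := 1 + eU + eZ + eU2 with hK_def
  clear_value eU eZ eU2 K
  have hK0 : 0 < K := by rw [hK_def]; linarith
  have hE : ∀ M : ℕ, 1 ≤ M →
      entryNorm n (NormedSpace.exp ((M:ℝ) • u + ((M:ℝ))^2 • z)) ≤ K * (M:ℝ)^2 := by
    intro M hM
    have hM1 : (1:ℝ) ≤ (M:ℝ) := by exact_mod_cast hM
    rw [hexp M]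
    apply Stmt3Aux.entryNorm_le
    intro i j
    simp only [Matrix.add_apply, Matrix.smul_apply, smul_eq_mul]
    have t1 : ‖(1 : Matrix (Fin (n+2)) (Fin (n+2)) ℂ) i j‖ ≤ 1 := by
      rw [Matrix.one_apply]
      split_ifs <;> simp
    have habs : ‖(((M:ℝ)) : ℂ)‖ = (M:ℝ) := by
      rw [Complex.norm_real, Real.norm_of_nonneg (by positivity)]
    have hb1 := Stmt3Aux.le_entryNorm u i j
    have hb2 := Stmt3Aux.le_entryNorm z i j
    have hb3 := Stmt3Aux.le_entryNorm (u * u) i j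
    have e2 : ‖(((M:ℝ)) : ℂ) * u i j‖ = (M:ℝ) * ‖u i j‖ := by
      rw [norm_mul, habs]
    have e3 : ‖((((M:ℝ)) : ℂ))^2 * z i j‖ = (M:ℝ)^2 * ‖z i j‖ := by
      rw [norm_mul, norm_pow, habs]
    have e4 : ‖(2⁻¹ : ℂ) * (((((M:ℝ)) : ℂ))^2 * (u * u) i j)‖
        = 2⁻¹ * ((M:ℝ)^2 * ‖(u * u) i j‖) := by
      rw [norm_mul, norm_mul, norm_pow, habs, norm_inv]
      norm_num
    have tri1 := norm_add_le
      ((1 : Matrix (Fin (n+2)) (Fin (n+2)) ℂ) i j + (((M:ℝ)) : ℂ) * u i j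
        + ((((M:ℝ)) : ℂ))^2 * z i j) ((2⁻¹ : ℂ) * (((((M:ℝ)) : ℂ))^2 * (u * u) i j))
    have tri2 := norm_add_le
      ((1 : Matrix (Fin (n+2)) (Fin (n+2)) ℂ) i j + (((M:ℝ)) : ℂ) * u i j)
      (((((M:ℝ)) : ℂ))^2 * z i j)
    have tri3 := norm_add_le ((1 : Matrix (Fin (n+2)) (Fin (n+2)) ℂ) i j)
      ((((M:ℝ)) : ℂ) * u i j)
    rw [e4] at tri1
    rw [e3] at tri2
    rw [e2] at tri3
    have hMM : (M:ℝ) ≤ (M:ℝ)^2 := le_self_pow₀ hM1 (by norm_num)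
    have hM2 : (1:ℝ) ≤ (M:ℝ)^2 := le_trans hM1 hMM
    have habs1 : ‖u i j‖ ≤ eU := by rw [heU_def]; exact hb1
    have habs2 : ‖z i j‖ ≤ eZ := by rw [heZ_def]; exact hb2
    have habs3 : ‖(u * u) i j‖ ≤ eU2 := by rw [heU2_def]; exact hb3
    have h0 : (0:ℝ) ≤ ‖u i j‖ := norm_nonneg _
    have h0' : (0:ℝ) ≤ ‖z i j‖ := norm_nonneg _
    have h0'' : (0:ℝ) ≤ ‖(u * u) i j‖ := norm_nonneg _
    have hM20 : (0:ℝ) ≤ (M:ℝ)^2 := by positivity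
    have f1 : (M:ℝ) * ‖u i j‖ ≤ (M:ℝ)^2 * eU := by
      calc (M:ℝ) * ‖u i j‖ ≤ (M:ℝ) * eU :=
            mul_le_mul_of_nonneg_left habs1 (by positivity)
        _ ≤ (M:ℝ)^2 * eU := mul_le_mul_of_nonneg_right hMM (le_trans h0 habs1)
    have f2 : (M:ℝ)^2 * ‖z i j‖ ≤ (M:ℝ)^2 * eZ :=
      mul_le_mul_of_nonneg_left habs2 hM20
    have f3 : 2⁻¹ * ((M:ℝ)^2 * ‖(u * u) i j‖) ≤ (M:ℝ)^2 * eU2 := by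
      have g1 : (M:ℝ)^2 * ‖(u * u) i j‖ ≤ (M:ℝ)^2 * eU2 :=
        mul_le_mul_of_nonneg_left habs3 hM20
      have g2 : (0:ℝ) ≤ (M:ℝ)^2 * ‖(u * u) i j‖ := mul_nonneg hM20 h0''
      linarith only [g1, g2]
    rw [hK_def]
    linarith only [tri1, tri2, tri3, t1, f1, f2, f3, hM2]
  -- choice of the offset
  set D : ℝ := |c2.im| + |c3.im| with hD_def
  have hD0 : 0 ≤ D := by rw [hD_def]; positivity
  set m0 : ℕ := ⌈(8 * D) / |Q|⌉₊ + 1 with hm0_def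
  have hm01 : 1 ≤ m0 := by rw [hm0_def]; omega
  have hlow : ∀ m : ℕ, |Q| / 4 * (((m + m0 : ℕ)):ℝ)^4
      ≤ ‖DeltaC n (NormedSpace.exp
          ((((m + m0 : ℕ)):ℝ) • u + ((((m + m0 : ℕ)):ℝ))^2 • z))‖ := by
    intro m
    have hR1 : (1:ℝ) ≤ (((m + m0 : ℕ)):ℝ) := by exact_mod_cast (by omega : 1 ≤ m + m0)
    have him := keyIm (m + m0)
    have habs := Complex.abs_im_le_norm (DeltaC n (NormedSpace.exp
      ((((m + m0 : ℕ)):ℝ) • u + ((((m + m0 : ℕ)):ℝ))^2 • z)))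
    refine le_trans ?_ habs
    rw [him, hc4]
    set R : ℝ := (((m + m0 : ℕ)):ℝ) with hR_def
    have hR0 : (0:ℝ) < R := lt_of_lt_of_le one_pos hR1
    have hRD : 8 * D ≤ |Q| * R := by
      have h1 : (8 * D) / |Q| ≤ (m0 : ℝ) := by
        calc (8 * D) / |Q| ≤ (⌈(8 * D) / |Q|⌉₊ : ℝ) := Nat.le_ceil _
          _ ≤ (m0 : ℝ) := by rw [hm0_def]; push_cast; linarith only []
      have h2 : (m0:ℝ) ≤ R := by rw [hR_def]; exact_mod_cast Nat.le_add_left m0 m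
      calc 8*D = (8*D/|Q|) * |Q| := (div_mul_cancel₀ _ (ne_of_gt hQpos)).symm
        _ ≤ R * |Q| := mul_le_mul_of_nonneg_right (le_trans h1 h2) (le_of_lt hQpos)
        _ = |Q| * R := mul_comm _ _
    have h2 := neg_abs_le c2.im
    have h3 := neg_abs_le c3.im
    have hr32 : R^2 ≤ R^3 := pow_le_pow_right₀ hR1 (by norm_num)
    have hr43 : (0:ℝ) ≤ R^3 := pow_nonneg (le_of_lt hR0) 3
    have hD8 : 8 * D * R^3 ≤ |Q| * R * R^3 := mul_le_mul_of_nonneg_right hRD hr43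
    have hR20 : (0:ℝ) ≤ R^2 := sq_nonneg R
    have A1 : |c2.im| * R^2 ≤ |c2.im| * R^3 :=
      mul_le_mul_of_nonneg_left hr32 (abs_nonneg c2.im)
    have A2 : -|c2.im| * R^2 ≤ c2.im * R^2 := mul_le_mul_of_nonneg_right h2 hR20
    have A3 : -|c3.im| * R^3 ≤ c3.im * R^3 := mul_le_mul_of_nonneg_right h3 hr43
    have B2 : c2.im * R^2 ≤ |c2.im| * R^2 :=
      mul_le_mul_of_nonneg_right (le_abs_self c2.im) hR20
    have B3 : c3.im * R^3 ≤ |c3.im| * R^3 :=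
      mul_le_mul_of_nonneg_right (le_abs_self c3.im) hr43
    have hR40 : (0:ℝ) ≤ R^4 := pow_nonneg (le_of_lt hR0) 4
    rw [hD_def] at hD8
    rcases le_or_gt 0 Q with hq | hq
    · rw [abs_of_nonneg hq] at hD8 ⊢
      have hQR : 0 ≤ Q * R^4 := mul_nonneg hq hR40
      refine le_trans ?_ (le_abs_self _)
      linarith only [A1, A2, A3, hD8, hq, hQR]
    · rw [abs_of_neg hq] at hD8 ⊢
      have hQR : Q * R^4 ≤ 0 := mul_nonpos_iff.mpr (Or.inr ⟨le_of_lt hq, hR40⟩)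
      refine le_trans ?_ (neg_le_abs _)
      linarith only [A1, B2, B3, hD8, hq, hQR]
  -- conclusion
  refine ⟨fun m => NormedSpace.exp ((((m + m0 : ℕ)):ℝ) • u + ((((m + m0 : ℕ)):ℝ))^2 • z),
    |Q| / (4 * K^2), 2, by positivity, by norm_num, ?_, ?_, ?_⟩
  · intro m
    exact ⟨_, hwmem (m + m0), rfl⟩
  · -- tendsto
    set γ : ℝ := Real.sqrt (|Q| / 8) with hγ_def
    have hγ0 : 0 < γ := Real.sqrt_pos.mpr (by positivity)
    have hγsq : γ^2 = |Q| / 8 := Real.sq_sqrt (by positivity)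
    have hfg : ∀ m : ℕ, γ * (m:ℝ) ≤ entryNorm n (NormedSpace.exp
        ((((m + m0 : ℕ)):ℝ) • u + ((((m + m0 : ℕ)):ℝ))^2 • z)) := by
      intro m
      have hE0 : 0 ≤ entryNorm n (NormedSpace.exp
        ((((m + m0 : ℕ)):ℝ) • u + ((((m + m0 : ℕ)):ℝ))^2 • z)) := Stmt3Aux.entryNorm_nonneg _
      have hrho := Stmt3Aux.rhoNorm_le (NormedSpace.exp
        ((((m + m0 : ℕ)):ℝ) • u + ((((m + m0 : ℕ)):ℝ))^2 • z))
      have hdr := Stmt3Aux.delta_le_rhoNorm hn (NormedSpace.exp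
        ((((m + m0 : ℕ)):ℝ) • u + ((((m + m0 : ℕ)):ℝ))^2 • z))
      have hl := hlow m
      have hR1 : (1:ℝ) ≤ (((m + m0 : ℕ)):ℝ) := by exact_mod_cast (by omega : 1 ≤ m + m0)
      set E : ℝ := entryNorm n (NormedSpace.exp
        ((((m + m0 : ℕ)):ℝ) • u + ((((m + m0 : ℕ)):ℝ))^2 • z)) with hE_def
      set R : ℝ := (((m + m0 : ℕ)):ℝ) with hR_def
      have hE2 : (γ * R^2)^2 ≤ E^2 := by
        rw [mul_pow, hγsq]
        linarith only [hrho, hdr, hl]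
      have hE3 : γ * R^2 ≤ E := by
        have hs := Real.sqrt_le_sqrt hE2
        rwa [Real.sqrt_sq (by positivity), Real.sqrt_sq hE0] at hs
      have hmR : (m:ℝ) ≤ R^2 := by
        have g1 : (m:ℝ) ≤ R := by rw [hR_def]; exact_mod_cast Nat.le_add_right m m0
        have g2 : R ≤ R^2 := le_self_pow₀ hR1 (by norm_num)
        linarith only [g1, g2]
      calc γ * (m:ℝ) ≤ γ * R^2 := mul_le_mul_of_nonneg_left hmR (le_of_lt hγ0)
        _ ≤ E := hE3
    exact Filter.tendsto_atTop_mono hfg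
      (Filter.Tendsto.const_mul_atTop hγ0 tendsto_natCast_atTop_atTop)
  · intro m
    have hE0 : 0 ≤ entryNorm n (NormedSpace.exp
      ((((m + m0 : ℕ)):ℝ) • u + ((((m + m0 : ℕ)):ℝ))^2 • z)) := Stmt3Aux.entryNorm_nonneg _
    have hEK := hE (m + m0) (by omega)
    have hrho := Stmt3Aux.rhoNorm_le (NormedSpace.exp
      ((((m + m0 : ℕ)):ℝ) • u + ((((m + m0 : ℕ)):ℝ))^2 • z))
    have hdr := Stmt3Aux.delta_le_rhoNorm hn (NormedSpace.exp
      ((((m + m0 : ℕ)):ℝ) • u + ((((m + m0 : ℕ)):ℝ))^2 • z))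
    have hl := hlow m
    have hR1 : (1:ℝ) ≤ (((m + m0 : ℕ)):ℝ) := by exact_mod_cast (by omega : 1 ≤ m + m0)
    set E : ℝ := entryNorm n (NormedSpace.exp
      ((((m + m0 : ℕ)):ℝ) • u + ((((m + m0 : ℕ)):ℝ))^2 • z)) with hE_def
    set R : ℝ := (((m + m0 : ℕ)):ℝ) with hR_def
    constructor
    · have hE2 : E^2 ≤ K^2 * R^4 := by
        have g1 : E^2 ≤ (K * R^2)^2 := pow_le_pow_left₀ hE0 hEK 2
        have g2 : (K * R^2)^2 = K^2 * R^4 := by ring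
        linarith only [g1, g2]
      have hstep : |Q| / (4 * K^2) * E^2 ≤ |Q| / (4 * K^2) * (K^2 * R^4) :=
        mul_le_mul_of_nonneg_left hE2 (by positivity)
      have heq : |Q| / (4 * K^2) * (K^2 * R^4) = |Q| / 4 * R^4 := by
        field_simp
      calc |Q| / (4 * K^2) * E^2 ≤ |Q| / 4 * R^4 := by rw [← heq]; exact hstep
        _ ≤ _ := le_trans hl hdr
    · exact hrho
end
end

section
/- Suppose there is an element u of 𝔥 such that φ_u ≠ 0, y_u = 0, 𝗒_u = 0, and |x_u|² + 2·Re(φ_u·conj(η_u)) = 0. Then there exist a sequence (h_m) of elements of H and constants c, C > 0 such that ‖h_m‖ → ∞ as m → ∞ and c·‖h_m‖² ≤ ‖ρ(h_m)‖ ≤ C·‖h_m‖² for every m. -/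
open scoped BigOperators

noncomputable section

def sigF (n : ℕ) (i : Fin (n+2)) : Fin (n+2) :=
  if (i:ℕ) = 0 then ⟨n+1, by omega⟩
  else if (i:ℕ) = 1 then ⟨n, by omega⟩
  else if (i:ℕ) = n then ⟨1, by omega⟩
  else if (i:ℕ) = n+1 then ⟨0, by omega⟩
  else i

lemma sigF_val (n : ℕ) (i : Fin (n+2)) : ((sigF n i : Fin (n+2)) : ℕ) =
    if (i:ℕ) = 0 then n+1 else if (i:ℕ) = 1 then n
    else if (i:ℕ) = n then 1 else if (i:ℕ) = n+1 then 0 else i := by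
  unfold sigF
  split_ifs <;> rfl

lemma Jmat_symm (n : ℕ) (i j : Fin (n+2)) : Jmat n i j = Jmat n j i := by
  unfold Jmat
  refine if_congr ?_ rfl rfl
  simp only [Fin.ext_iff]
  omega

lemma Jmat_eq_one (n : ℕ) (hn : 2 ≤ n) (i : Fin (n+2)) : Jmat n i (sigF n i) = 1 := by
  have hi := i.isLt
  have hv := sigF_val n i
  unfold Jmat
  rw [if_pos]
  by_cases h0 : (i:ℕ) = 0
  · left; constructor; exact h0; rw [hv, if_pos h0]
  by_cases h1 : (i:ℕ) = 1
  · right; left; constructor; exact h1; rw [hv, if_neg h0, if_pos h1]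
  by_cases h2 : (i:ℕ) = n
  · right; right; left; constructor; exact h2
    rw [hv, if_neg h0, if_neg h1, if_pos h2]
  by_cases h3 : (i:ℕ) = n+1
  · right; right; right; left; constructor; exact h3
    rw [hv, if_neg h0, if_neg h1, if_neg h2, if_pos h3]
  · right; right; right; right
    refine ⟨by omega, by omega, ?_⟩
    apply Fin.ext
    rw [hv, if_neg h0, if_neg h1, if_neg h2, if_neg h3]

lemma Jmat_eq_zero (n : ℕ) (hn : 2 ≤ n) (i k : Fin (n+2)) (h : k ≠ sigF n i) :
    Jmat n i k = 0 := by
  unfold Jmat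
  rw [if_neg]
  intro hc
  apply h
  apply Fin.ext
  rw [sigF_val]
  have hi := i.isLt
  have hk := k.isLt
  rcases hc with ⟨h0, hk0⟩ | ⟨h1, hk1⟩ | ⟨h2, hk2⟩ | ⟨h3, hk3⟩ | ⟨ha, hb, hcc⟩
  · rw [if_pos h0]; exact hk0
  · rw [if_neg (by omega), if_pos h1]; exact hk1
  · rw [if_neg (by omega), if_neg (by omega), if_pos h2]; exact hk2
  · rw [if_neg (by omega), if_neg (by omega), if_neg (by omega), if_pos h3]; exact hk3
  · rw [if_neg (by omega), if_neg (by omega), if_neg (by omega), if_neg (by omega)]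
    exact congrArg Fin.val hcc.symm

lemma exp_sq_zero_s4 {N : ℕ} (v : Matrix (Fin N) (Fin N) ℂ) (hv : v * v = 0) :
    NormedSpace.exp v = 1 + v := by
  rw [NormedSpace.exp_eq_tsum (𝕂 := ℂ)]
  have h : ∀ k ∉ ({0,1} : Finset ℕ), ((k.factorial : ℂ))⁻¹ • v ^ k = 0 := by
    intro k hk
    simp only [Finset.mem_insert, Finset.mem_singleton] at hk
    have h2 : 2 ≤ k := by omega
    have hvk : v ^ k = 0 := by
      have : v ^ k = v ^ 2 * v ^ (k - 2) := by rw [← pow_add]; congr 1; omega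
      rw [this, pow_two, hv, zero_mul]
    rw [hvk, smul_zero]
  rw [show (fun x : Matrix (Fin N) (Fin N) ℂ => ∑' (n : ℕ), ((n.factorial : ℂ))⁻¹ • x ^ n) v = ∑' (n : ℕ), ((n.factorial : ℂ))⁻¹ • v ^ n from rfl, tsum_eq_sum h, Finset.sum_pair (by norm_num : (0:ℕ) ≠ 1)]
  simp

lemma lieN_rel (n : ℕ) (hn : 2 ≤ n) (u : Matrix (Fin (n+2)) (Fin (n+2)) ℂ)
    (h : inLieN n u) (i j : Fin (n+2)) :
    (starRingEnd ℂ) (u (sigF n j) i) + u (sigF n i) j = 0 := by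
  have h2 := congrFun (congrFun h.2 i) j
  have e1 : (u.conjTranspose * Jmat n) i j = (starRingEnd ℂ) (u (sigF n j) i) := by
    rw [Matrix.mul_apply]
    rw [Finset.sum_eq_single (sigF n j)]
    · rw [Matrix.conjTranspose_apply, Jmat_symm, Jmat_eq_one n hn j, mul_one]
      rfl
    · intro b _ hb
      rw [Jmat_symm, Jmat_eq_zero n hn j b hb, mul_zero]
    · intro habs; exact absurd (Finset.mem_univ _) habs
  have e2 : (Jmat n * u) i j = u (sigF n i) j := by
    rw [Matrix.mul_apply]
    rw [Finset.sum_eq_single (sigF n i)]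
    · rw [Jmat_eq_one n hn i, one_mul]
    · intro b _ hb
      rw [Jmat_eq_zero n hn i b hb, zero_mul]
    · intro habs; exact absurd (Finset.mem_univ _) habs
  rw [Matrix.add_apply, e1, e2, Matrix.zero_apply] at h2
  exact h2

lemma sig_zero (n : ℕ) {h : 0 < n+2} {h' : n+1 < n+2} :
    sigF n ⟨0,h⟩ = ⟨n+1,h'⟩ := by
  unfold sigF; rw [if_pos rfl]

lemma sig_one (n : ℕ) (hn : 2 ≤ n) {h : 1 < n+2} {h' : n < n+2} :
    sigF n ⟨1,h⟩ = ⟨n,h'⟩ := by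
  unfold sigF
  rw [if_neg (by simp only [Fin.val_mk]; omega), if_pos rfl]

lemma sig_n (n : ℕ) (hn : 2 ≤ n) {h : n < n+2} {h' : 1 < n+2} :
    sigF n ⟨n,h⟩ = ⟨1,h'⟩ := by
  unfold sigF
  rw [if_neg (by simp only [Fin.val_mk]; omega),
    if_neg (by simp only [Fin.val_mk]; omega), if_pos rfl]

lemma sig_n1 (n : ℕ) (hn : 2 ≤ n) {h : n+1 < n+2} {h' : 0 < n+2} :
    sigF n ⟨n+1,h⟩ = ⟨0,h'⟩ := by
  unfold sigF
  rw [if_neg (by simp only [Fin.val_mk]; omega),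
    if_neg (by simp only [Fin.val_mk]; omega),
    if_neg (by simp only [Fin.val_mk]; omega), if_pos rfl]

lemma sig_mid (n : ℕ) (k : Fin (n+2)) (h2 : 2 ≤ (k:ℕ)) (h3 : (k:ℕ) + 1 ≤ n) :
    sigF n k = k := by
  unfold sigF
  rw [if_neg (by omega), if_neg (by omega), if_neg (by omega), if_neg (by omega)]

lemma usq_zero (n : ℕ) (hn : 2 ≤ n) (u : Matrix (Fin (n+2)) (Fin (n+2)) ℂ)
    (hLie : inLieN n u) (hy : yV n u = 0) (hsy : syR n u = 0)
    (hq : nsqR n (xV n u) + 2 * (phiC n u * (starRingEnd ℂ) (etaC n u)).re = 0) :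
    u * u = 0 := by
  have htri := hLie.1
  have hrel := lieN_rel n hn u hLie
  have hy' : ∀ j : Fin (n+2), 2 ≤ (j:ℕ) → (j:ℕ)+1 ≤ n →
      u ⟨1, by omega⟩ j = 0 := by
    intro j hj1 hj2
    have h0 := congrFun hy j
    simp only [yV, Pi.zero_apply] at h0
    rwa [if_pos ⟨hj1, hj2⟩] at h0
  have Zrow : ∀ k j : Fin (n+2), (k:ℕ) ≠ 0 → (j:ℕ) ≠ n+1 → u k j = 0 := by
    intro k j hk hj
    by_cases hle : (j:ℕ) ≤ (k:ℕ)
    · exact htri k j hle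
    have hkj : (k:ℕ) < (j:ℕ) := by omega
    have hjn : (j:ℕ) ≤ n := by have := j.isLt; omega
    by_cases hk1 : (k:ℕ) = 1
    · have hk' : k = ⟨1, Nat.succ_lt_succ (Nat.succ_pos n)⟩ := Fin.ext hk1
      rw [hk']
      by_cases hjn' : (j:ℕ) = n
      · have hj' : j = ⟨n, Nat.lt_succ_of_lt (Nat.lt_succ_self n)⟩ := Fin.ext hjn'
        rw [hj']
        have h1 := hrel ⟨n, by omega⟩ ⟨n, by omega⟩
        rw [sig_n n hn (h' := by omega)] at h1
        have him : (u ⟨1, by omega⟩ ⟨n, by omega⟩).im = 0 := hsy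
        have hre : (u ⟨1, by omega⟩ ⟨n, by omega⟩).re = 0 := by
          have h2 := congrArg Complex.re h1
          simp only [Complex.add_re, Complex.conj_re, Complex.zero_re] at h2
          linarith
        exact Complex.ext hre him
      · exact hy' j (by omega) (by omega)
    · have hk2 : 2 ≤ (k:ℕ) := by omega
      have hkn : (k:ℕ) + 1 ≤ n := by omega
      by_cases hjn' : (j:ℕ) = n
      · have hj' : j = ⟨n, Nat.lt_succ_of_lt (Nat.lt_succ_self n)⟩ := Fin.ext hjn'
        rw [hj']
        have h1 := hrel k ⟨n, by omega⟩
        rw [sig_n n hn (h' := by omega), sig_mid n k hk2 hkn] at h1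
        rw [hy' k hk2 hkn, map_zero, zero_add] at h1
        exact h1
      · have h1 := hrel k j
        rw [sig_mid n k hk2 hkn, sig_mid n j (by omega) (by omega)] at h1
        rw [htri j k (le_of_lt hkj), map_zero, zero_add] at h1
        exact h1
  ext i j
  rw [Matrix.mul_apply, Matrix.zero_apply]
  by_cases hi0 : (i:ℕ) = 0
  · by_cases hjn1 : (j:ℕ) = n+1
    · have hi' : i = ⟨0, Nat.succ_pos (n+1)⟩ := Fin.ext hi0
      rw [hi']
      have hj' : j = ⟨n+1, Nat.lt_succ_self (n+1)⟩ := Fin.ext hjn1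
      rw [hj']
      have term : ∀ k : Fin (n+2),
          u ⟨0, by omega⟩ k * u k ⟨n+1, by omega⟩ =
          -(xV n u k * (starRingEnd ℂ) (xV n u k)
            + (if k = ⟨1, by omega⟩ then phiC n u * (starRingEnd ℂ) (etaC n u) else 0)
            + (if k = ⟨n, by omega⟩ then etaC n u * (starRingEnd ℂ) (phiC n u) else 0)) := by
        intro k
        by_cases hk0 : (k:ℕ) = 0
        · have hk' : k = ⟨0, Nat.succ_pos (n+1)⟩ := Fin.ext hk0
          rw [hk']
          rw [htri ⟨0, by omega⟩ ⟨0, by omega⟩ le_rfl, zero_mul]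
          rw [show xV n u ⟨0, by omega⟩ = 0 from
            if_neg (by simp only [Fin.val_mk]; omega)]
          rw [if_neg (by simp only [Fin.mk.injEq]; omega),
            if_neg (by simp only [Fin.mk.injEq]; omega)]
          ring
        by_cases hk1 : (k:ℕ) = 1
        · have hk' : k = ⟨1, Nat.succ_lt_succ (Nat.succ_pos n)⟩ := Fin.ext hk1
          rw [hk']
          have h1 := hrel ⟨n, by omega⟩ ⟨n+1, by omega⟩
          rw [sig_n n hn (h' := by omega), sig_n1 n hn (h' := by omega)] at h1
          have h2 : u ⟨1, by omega⟩ ⟨n+1, by omega⟩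
              = -(starRingEnd ℂ) (u ⟨0, by omega⟩ ⟨n, by omega⟩) := by
            linear_combination h1
          rw [h2]
          rw [show xV n u ⟨1, by omega⟩ = 0 from
            if_neg (by simp only [Fin.val_mk]; omega)]
          rw [if_pos rfl, if_neg (by simp only [Fin.mk.injEq]; omega)]
          unfold phiC etaC
          ring
        by_cases hkn : (k:ℕ) = n
        · have hk' : k = ⟨n, Nat.lt_succ_of_lt (Nat.lt_succ_self n)⟩ := Fin.ext hkn
          rw [hk']
          have h1 := hrel ⟨1, by omega⟩ ⟨n+1, by omega⟩
          rw [sig_one n hn (h' := by omega), sig_n1 n hn (h' := by omega)] at h1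
          have h2 : u ⟨n, by omega⟩ ⟨n+1, by omega⟩
              = -(starRingEnd ℂ) (u ⟨0, by omega⟩ ⟨1, by omega⟩) := by
            linear_combination h1
          rw [h2]
          rw [show xV n u ⟨n, by omega⟩ = 0 from
            if_neg (by simp only [Fin.val_mk]; omega)]
          rw [if_neg (by simp only [Fin.mk.injEq]; omega), if_pos rfl]
          unfold phiC etaC
          ring
        by_cases hkn1 : (k:ℕ) = n+1
        · have hk' : k = ⟨n+1, Nat.lt_succ_self (n+1)⟩ := Fin.ext hkn1
          rw [hk']
          rw [htri ⟨n+1, by omega⟩ ⟨n+1, by omega⟩ le_rfl, mul_zero]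
          rw [show xV n u ⟨n+1, by omega⟩ = 0 from
            if_neg (by simp only [Fin.val_mk]; omega)]
          rw [if_neg (by simp only [Fin.mk.injEq]; omega),
            if_neg (by simp only [Fin.mk.injEq]; omega)]
          ring
        · have hk2 : 2 ≤ (k:ℕ) := by omega
          have hk3 : (k:ℕ) + 1 ≤ n := by have := k.isLt; omega
          have h1 := hrel k ⟨n+1, by omega⟩
          rw [sig_n1 n hn (h' := by omega), sig_mid n k hk2 hk3] at h1
          have h2 : u k ⟨n+1, by omega⟩
              = -(starRingEnd ℂ) (u ⟨0, by omega⟩ k) := by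
            linear_combination h1
          rw [h2]
          rw [show xV n u k = u ⟨0, by omega⟩ k from if_pos ⟨hk2, hk3⟩]
          rw [if_neg (by rw [Fin.ext_iff]; simp only [Fin.val_mk]; omega),
            if_neg (by rw [Fin.ext_iff]; simp only [Fin.val_mk]; omega)]
          ring
      rw [Finset.sum_congr rfl (fun k _ => term k)]
      rw [Finset.sum_neg_distrib]
      rw [Finset.sum_add_distrib, Finset.sum_add_distrib]
      simp only [Finset.sum_ite_eq', Finset.mem_univ, if_true]
      have hx : ∑ k : Fin (n+2), xV n u k * (starRingEnd ℂ) (xV n u k)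
          = ((nsqR n (xV n u) : ℝ) : ℂ) := by
        unfold nsqR
        push_cast
        refine Finset.sum_congr rfl fun k _ => ?_
        rw [Complex.mul_conj]
      have he : etaC n u * (starRingEnd ℂ) (phiC n u)
          = (starRingEnd ℂ) (phiC n u * (starRingEnd ℂ) (etaC n u)) := by
        rw [map_mul, Complex.conj_conj]
        ring
      rw [hx, he]
      rw [add_assoc, Complex.add_conj]
      rw [show (2:ℝ) * (phiC n u * (starRingEnd ℂ) (etaC n u)).re
        = 2 * (phiC n u * (starRingEnd ℂ) (etaC n u)).re from rfl]
      rw [← Complex.ofReal_add]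
      rw [show nsqR n (xV n u) + 2 * (phiC n u * (starRingEnd ℂ) (etaC n u)).re = 0 from hq]
      simp
    · apply Finset.sum_eq_zero
      intro k _
      by_cases hk0 : (k:ℕ) = 0
      · rw [htri i k (by omega), zero_mul]
      · rw [Zrow k j hk0 hjn1, mul_zero]
  · apply Finset.sum_eq_zero
    intro k _
    by_cases hkn1 : (k:ℕ) = n+1
    · rw [htri k j (by have := j.isLt; omega), mul_zero]
    · rw [Zrow i k hi0 hkn1, zero_mul]

theorem stmt4 (n : ℕ) (hn : 2 ≤ n)
    (𝔥 : Submodule ℝ (Matrix (Fin (n+2)) (Fin (n+2)) ℂ))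
    (h_sub : ∀ u ∈ 𝔥, inLieN n u)
    (h_bracket : ∀ u ∈ 𝔥, ∀ v ∈ 𝔥, u * v - v * u ∈ 𝔥)
    (u : Matrix (Fin (n+2)) (Fin (n+2)) ℂ) (hu : u ∈ 𝔥)
    (hphi : phiC n u ≠ 0) (hy : yV n u = 0) (hsy : syR n u = 0)
    (hq : nsqR n (xV n u) + 2 * (phiC n u * (starRingEnd ℂ) (etaC n u)).re = 0) :
    ∃ (h : ℕ → Matrix (Fin (n+2)) (Fin (n+2)) ℂ) (c C : ℝ),
      0 < c ∧ 0 < C ∧ (∀ m, h m ∈ expSet n 𝔥) ∧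
      Filter.Tendsto (fun m => entryNorm n (h m)) Filter.atTop Filter.atTop ∧
      ∀ m, c * (entryNorm n (h m))^2 ≤ rhoNorm n (h m) ∧
        rhoNorm n (h m) ≤ C * (entryNorm n (h m))^2 := by
  classical
  have hLie := h_sub u hu
  have htri := hLie.1
  have hrel := lieN_rel n hn u hLie
  have husq : u * u = 0 := usq_zero n hn u hLie hy hsy hq
  set a := ‖phiC n u‖ with ha
  have ha0 : 0 < a := by rw [ha]; exact norm_pos_iff.mpr hphi
  set M := entryNorm n u with hM
  have haM : a ≤ M := by
    rw [ha, hM]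
    exact Finset.le_sup' (fun p : Fin (n+2) × Fin (n+2) => ‖u p.1 p.2‖)
      (Finset.mem_univ ((⟨0, by omega⟩ : Fin (n+2)), (⟨1, by omega⟩ : Fin (n+2))))
  have hM0 : 0 < M := lt_of_lt_of_le ha0 haM
  have uNN1 : u ⟨n, by omega⟩ ⟨n+1, by omega⟩ = -(starRingEnd ℂ) (phiC n u) := by
    have h1 := hrel ⟨1, by omega⟩ ⟨n+1, by omega⟩
    rw [sig_one n hn (h' := by omega), sig_n1 n hn (h' := by omega)] at h1
    unfold phiC
    linear_combination h1
  set c : ℕ → ℝ := fun m => ((m:ℝ)+1)/a with hc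
  have hc0 : ∀ m, 0 < c m := fun m => div_pos (by positivity) ha0
  have hca : ∀ m, c m * a = (m:ℝ)+1 := fun m => div_mul_cancel₀ _ (ne_of_gt ha0)
  set A : ℕ → Matrix (Fin (n+2)) (Fin (n+2)) ℂ :=
    fun m => NormedSpace.exp ((c m) • u) with hA
  have hform : ∀ m, A m = 1 + (c m) • u := by
    intro m
    apply exp_sq_zero_s4
    rw [smul_mul_smul_comm, husq, smul_zero]
  have hent : ∀ m (i j : Fin (n+2)), A m i j
      = (if i = j then 1 else 0) + ((c m : ℝ) : ℂ) * u i j := by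
    intro m i j
    rw [hform]
    rw [Matrix.add_apply, Matrix.one_apply, Matrix.smul_apply, Complex.real_smul]
  have hEb : ∀ m (i j : Fin (n+2)), ‖A m i j‖ ≤ entryNorm n (A m) := by
    intro m i j
    exact Finset.le_sup' (fun p : Fin (n+2) × Fin (n+2) => ‖A m p.1 p.2‖)
      (Finset.mem_univ (i, j))
  have q1 : ∀ m, A m ⟨0, by omega⟩ ⟨1, by omega⟩ = ((c m : ℝ) : ℂ) * phiC n u := by
    intro m
    rw [hent, if_neg (by simp only [Fin.mk.injEq]; omega), zero_add]
    rfl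
  have q2 : ∀ m, A m ⟨n, by omega⟩ ⟨n+1, by omega⟩
      = ((c m : ℝ) : ℂ) * -((starRingEnd ℂ) (phiC n u)) := by
    intro m
    rw [hent, if_neg (by simp only [Fin.mk.injEq]; omega), zero_add, uNN1]
  have q3 : ∀ m, A m ⟨n, by omega⟩ ⟨1, by omega⟩ = 0 := by
    intro m
    rw [hent, if_neg (by simp only [Fin.mk.injEq]; omega), zero_add,
      htri ⟨n, by omega⟩ ⟨1, by omega⟩ (by simp only [Fin.val_mk]; omega), mul_zero]
  have habs01 : ∀ m, ‖A m ⟨0, by omega⟩ ⟨1, by omega⟩‖ = (m:ℝ)+1 := by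
    intro m
    rw [q1, norm_mul, Complex.norm_of_nonneg (le_of_lt (hc0 m)), ← ha, hca]
  have hlow : ∀ m : ℕ, (m:ℝ)+1 ≤ entryNorm n (A m) := by
    intro m
    rw [← habs01 m]
    exact hEb m _ _
  have hE0 : ∀ m, 0 ≤ entryNorm n (A m) := by
    intro m
    exact le_trans (norm_nonneg _) (hEb m ⟨0, by omega⟩ ⟨0, by omega⟩)
  have hup : ∀ m, entryNorm n (A m) ≤ c m * M := by
    intro m
    apply Finset.sup'_le
    intro p _
    rw [hent]
    by_cases hp : p.1 = p.2
    · rw [if_pos hp, htri p.1 p.2 (le_of_eq (congrArg Fin.val hp.symm)), mul_zero,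
        add_zero]
      rw [norm_one]
      calc (1:ℝ) ≤ (m:ℝ)+1 := by norm_num
        _ = c m * a := (hca m).symm
        _ ≤ c m * M := mul_le_mul_of_nonneg_left haM (le_of_lt (hc0 m))
    · rw [if_neg hp, zero_add, norm_mul, Complex.norm_of_nonneg (le_of_lt (hc0 m))]
      exact mul_le_mul_of_nonneg_left
        (Finset.le_sup' (fun p : Fin (n+2) × Fin (n+2) => ‖u p.1 p.2‖)
          (Finset.mem_univ p)) (le_of_lt (hc0 m))
  have hrho_low : ∀ m, (c m)^2 * a^2 ≤ rhoNorm n (A m) := by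
    intro m
    have qq : A m ⟨0, by omega⟩ ⟨1, by omega⟩ * A m ⟨n, by omega⟩ ⟨n+1, by omega⟩
        - A m ⟨0, by omega⟩ ⟨n+1, by omega⟩ * A m ⟨n, by omega⟩ ⟨1, by omega⟩
        = -((((c m)^2 * a^2 : ℝ)) : ℂ) := by
      rw [q1, q2, q3, mul_zero, sub_zero]
      have : (((c m : ℝ)) : ℂ) * phiC n u * ((((c m : ℝ)) : ℂ) * -((starRingEnd ℂ) (phiC n u)))
          = -((((c m : ℝ)) : ℂ)^2 * (phiC n u * (starRingEnd ℂ) (phiC n u))) := by ring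
      rw [this, Complex.mul_conj, Complex.normSq_eq_norm_sq, ← ha]
      push_cast
      ring
    have hle := Finset.le_sup'
      (fun q : (Fin (n+2) × Fin (n+2)) × Fin (n+2) × Fin (n+2) =>
        ‖A m q.1.1 q.2.1 * A m q.1.2 q.2.2 - A m q.1.1 q.2.2 * A m q.1.2 q.2.1‖)
      (Finset.mem_univ (((⟨0, by omega⟩ : Fin (n+2)), (⟨n, by omega⟩ : Fin (n+2))),
        ((⟨1, by omega⟩ : Fin (n+2)), (⟨n+1, by omega⟩ : Fin (n+2)))))
    simp only at hle
    rw [qq] at hle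
    rwa [norm_neg, Complex.norm_of_nonneg (r := (c m)^2 * a^2) (by positivity)] at hle
  have hrho_up : ∀ m, rhoNorm n (A m) ≤ 2 * (entryNorm n (A m))^2 := by
    intro m
    apply Finset.sup'_le
    intro q _
    calc ‖A m q.1.1 q.2.1 * A m q.1.2 q.2.2 - A m q.1.1 q.2.2 * A m q.1.2 q.2.1‖
        ≤ ‖A m q.1.1 q.2.1 * A m q.1.2 q.2.2‖
          + ‖A m q.1.1 q.2.2 * A m q.1.2 q.2.1‖ :=
          norm_sub_le _ _
      _ = ‖A m q.1.1 q.2.1‖ * ‖A m q.1.2 q.2.2‖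
          + ‖A m q.1.1 q.2.2‖ * ‖A m q.1.2 q.2.1‖ := by
          rw [norm_mul, norm_mul]
      _ ≤ entryNorm n (A m) * entryNorm n (A m)
          + entryNorm n (A m) * entryNorm n (A m) := by
          apply add_le_add
          · exact mul_le_mul (hEb m _ _) (hEb m _ _) (norm_nonneg _) (hE0 m)
          · exact mul_le_mul (hEb m _ _) (hEb m _ _) (norm_nonneg _) (hE0 m)
      _ = 2 * (entryNorm n (A m))^2 := by ring
  refine ⟨A, a^2/M^2, 2, by positivity, by norm_num, ?_, ?_, ?_⟩
  · intro m
    exact ⟨(c m) • u, Submodule.smul_mem _ _ hu, rfl⟩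
  · exact Filter.tendsto_atTop_mono
      (fun m : ℕ => le_trans (by linarith : ((m:ℕ):ℝ) ≤ ((m:ℕ):ℝ)+1) (hlow m))
      tendsto_natCast_atTop_atTop
  · intro m
    constructor
    · calc a^2/M^2 * (entryNorm n (A m))^2
          ≤ a^2/M^2 * (c m * M)^2 := by
            apply mul_le_mul_of_nonneg_left _ (by positivity)
            exact pow_le_pow_left₀ (hE0 m) (hup m) 2
        _ = (c m)^2 * a^2 := by
            field_simp
        _ ≤ rhoNorm n (A m) := hrho_low m
    · exact hrho_up m
end
end
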